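/- arXiv:1204.5043 — 10 statements merged into one kernel-verified Lean document; each statement's English description precedes it below -/
import Mathlib

section
/- For every u ∈ ℝ^d and every integer k with 1 ≤ k ≤ d, the dual norm of the k-support norm satisfies: sup{⟨w, u⟩ : ‖w‖_k^sp ≤ 1} = max{ (∑_{i∈I} u_i²)^{1/2} : I ⊆ {1,…,d}, |I| = k } = (∑_{i=1}^k (|u|↓_i)²)^{1/2}, i.e. the dual norm equals the ℓ2 norm of the k largest-magnitude entries of u. -/
/-!
Pairing `u` with a vector of norm at most one supported on a `k`-set `J` gives at most
`‖u_J‖₂` by Cauchy–Schwarz, with equality for `u_J / ‖u_J‖₂`; a linear functional bounded on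
`S_k` stays bounded on its convex hull and (by continuity) on the closure, which contains the
gauge unit ball. Finally an exchange argument shows that `‖u_J‖₂` over `|J| = k` is maximised
by the indices of the `k` largest `|u_i|`.
-/

/-- The nonincreasing rearrangement of the absolute values of `u`,
0-indexed: `absDown u i` is the `(i+1)`-th largest of `|u 0|, …, |u (d-1)|`. -/
noncomputable def absDown {d : ℕ} (u : Fin d → ℝ) (i : Fin d) : ℝ :=
  |u (Tuple.sort (fun j => |u j|) i.rev)|

/-- 1-indexed access to the nonincreasing rearrangement: `zD u i = |u|↓_i` for `1 ≤ i ≤ d`. -/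
noncomputable def zD {d : ℕ} (u : Fin d → ℝ) (i : ℕ) : ℝ :=
  if h : 1 ≤ i ∧ i ≤ d then absDown u ⟨i - 1, by omega⟩ else 0

/-- The unit ball of the k-support norm: the convex hull of
`S_k = {w : ‖w‖₀ ≤ k, ‖w‖₂ ≤ 1}`. -/
noncomputable def kSupBall (d k : ℕ) : Set (EuclideanSpace ℝ (Fin d)) :=
  convexHull ℝ {w | (Finset.univ.filter fun i => w i ≠ 0).card ≤ k ∧ ‖w‖ ≤ 1}

/-- The k-support norm, defined as the gauge of `kSupBall d k`. -/
noncomputable def kSupNorm (d k : ℕ) (w : EuclideanSpace ℝ (Fin d)) : ℝ :=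
  gauge (kSupBall d k) w

/-- The elastic-net norm `max{‖w‖₂, ‖w‖₁ / √k}`. -/
noncomputable def elNet (d k : ℕ) (w : EuclideanSpace ℝ (Fin d)) : ℝ :=
  max ‖w‖ ((∑ i, |w i|) / Real.sqrt k)

open Finset Topology
open scoped RealInnerProductSpace

namespace Finset

theorem sum_le_sum_of_card_eq_of_forall_le {ι M : Type*} [DecidableEq ι] [AddCommMonoid M]
    [LinearOrder M] [IsOrderedAddMonoid M] {I T : Finset ι} {g : ι → M} (hcard : #I = #T)
    (hle : ∀ t ∈ T, ∀ s ∉ T, g s ≤ g t) : ∑ i ∈ I, g i ≤ ∑ i ∈ T, g i := by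
  have hcard' : #(I \ T) = #(T \ I) := card_sdiff_comm hcard
  rw [← sum_inter_add_sum_sdiff I T, ← sum_inter_add_sum_sdiff T I, inter_comm T I]
  refine add_le_add le_rfl ?_
  rcases (T \ I).eq_empty_or_nonempty with hTI | hTI
  · rw [card_eq_zero.mp (hcard'.trans (card_eq_zero.mpr hTI)), hTI]
  obtain ⟨t, ht, ht_min⟩ := exists_min_image (T \ I) g hTI
  calc ∑ i ∈ I \ T, g i
      ≤ #(I \ T) • g t := sum_le_card_nsmul _ _ _ fun s hs =>
        hle t (mem_sdiff.mp ht).1 s (mem_sdiff.mp hs).2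
    _ = #(T \ I) • g t := by rw [hcard']
    _ ≤ ∑ i ∈ T \ I, g i := card_nsmul_le_sum _ _ _ ht_min

end Finset

section TopEntries

variable {d k : ℕ} (u : Fin d → ℝ)

theorem absDown_antitone : Antitone (absDown u) := fun _ _ hij =>
  Tuple.monotone_sort (fun j => |u j|) (Fin.rev_le_rev.mpr hij)

theorem sum_Icc_zD_sq (hkd : k ≤ d) :
    ∑ i ∈ Icc 1 k, zD u i ^ 2 = ∑ i : Fin k, absDown u (Fin.castLE hkd i) ^ 2 := by
  rw [← Ico_add_one_right_eq_Icc, sum_Ico_eq_sum_range, add_tsub_cancel_right, sum_range]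
  refine sum_congr rfl fun i _ => ?_
  rw [zD, dif_pos (by omega)]
  congr 3
  omega

theorem exists_top_indices (hkd : k ≤ d) :
    ∃ T : Finset (Fin d), #T = k ∧ (∀ t ∈ T, ∀ s ∉ T, |u s| ≤ |u t|) ∧
      ∑ i ∈ T, u i ^ 2 = ∑ i ∈ Icc 1 k, zD u i ^ 2 := by
  let τ : Equiv.Perm (Fin d) := Fin.revPerm.trans (Tuple.sort fun j => |u j|)
  have hτ : ∀ i, absDown u i = |u (τ i)| := fun _ => rfl
  let e : Fin k ↪ Fin d := (Fin.castLEEmb hkd).trans τ.toEmbedding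
  refine ⟨univ.map e, by simp, ?_, ?_⟩
  · simp only [mem_map, mem_univ, true_and, not_exists, forall_exists_index,
      forall_apply_eq_imp_iff]
    intro a s hs
    have hk : k ≤ (τ.symm s : ℕ) := by
      by_contra! h
      exact hs ⟨τ.symm s, h⟩ (by simp [e])
    have := absDown_antitone u (show Fin.castLE hkd a ≤ τ.symm s by
      rw [Fin.le_def, Fin.val_castLE]; omega)
    simpa [hτ, e] using this
  · rw [sum_map, sum_Icc_zD_sq u hkd]
    simp [hτ, e]

theorem sum_sq_le_sum_zD_sq (hkd : k ≤ d) {I : Finset (Fin d)} (hI : #I = k) :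
    ∑ i ∈ I, u i ^ 2 ≤ ∑ i ∈ Icc 1 k, zD u i ^ 2 := by
  obtain ⟨T, hT, hle, hsum⟩ := exists_top_indices u hkd
  rw [← hsum]
  exact sum_le_sum_of_card_eq_of_forall_le (hI.trans hT.symm) fun t ht s hs =>
    sq_le_sq.mpr (hle t ht s hs)

end TopEntries

theorem le_of_gauge_le_one_of_forall_le {E : Type*} [AddCommGroup E] [Module ℝ E]
    [TopologicalSpace E] [ContinuousSMul ℝ E] {s : Set E} {f : E → ℝ} {c : ℝ}
    (hs : Convex ℝ s) (h0 : 0 ∈ s) (habs : Absorbent ℝ s) (hf : Continuous f)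
    (hfs : ∀ v ∈ s, f v ≤ c) {w : E} (hw : gauge s w ≤ 1) : f w ≤ c :=
  closure_minimal hfs (isClosed_le hf continuous_const) (mem_closure_of_gauge_le_one hs h0 habs hw)

section KSupport

variable {d k : ℕ}

theorem mem_kSupBall_of_card_support_le {w : EuclideanSpace ℝ (Fin d)}
    (hw0 : #{i | w i ≠ 0} ≤ k) (hw : ‖w‖ ≤ 1) : w ∈ kSupBall d k :=
  subset_convexHull ℝ _ ⟨hw0, hw⟩

theorem zero_mem_kSupBall : (0 : EuclideanSpace ℝ (Fin d)) ∈ kSupBall d k :=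
  mem_kSupBall_of_card_support_le (by simp) (by simp)

theorem kSupBall_mem_nhds_zero (hk : 1 ≤ k) : kSupBall d k ∈ 𝓝 0 := by
  rcases Nat.eq_zero_or_pos d with rfl | hd
  · exact Filter.univ_mem' fun w => Subsingleton.elim 0 w ▸ zero_mem_kSupBall
  refine Filter.mem_of_superset (Metric.ball_mem_nhds 0 (by positivity : (0 : ℝ) < 1 / d)) ?_
  intro w hw
  rw [mem_ball_zero_iff, lt_div_iff₀' (by positivity)] at hw
  -- `w` is the barycentre of the `d` vectors `d w_i e_i`, each of norm `d |w_i| ≤ d ‖w‖ < 1`.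
  have hw_eq : w = ∑ i, (1 / d : ℝ) • EuclideanSpace.single i (d * w i) := by
    ext j
    simp [Pi.single_apply, hd.ne']
  rw [hw_eq]
  refine (convex_convexHull ℝ _).sum_mem (fun _ _ => by positivity) (by simp [hd.ne'])
    fun i _ => mem_kSupBall_of_card_support_le ?_ ?_
  · refine (card_le_card fun j => ?_).trans (card_singleton i).le |>.trans hk
    simp +contextual
  · rw [PiLp.norm_single, norm_mul, Real.norm_natCast]
    exact (mul_le_mul_of_nonneg_left (PiLp.norm_apply_le w i) d.cast_nonneg).trans hw.le

variable (u : EuclideanSpace ℝ (Fin d))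

theorem inner_le_of_card_support_le (hkd : k ≤ d) {v : EuclideanSpace ℝ (Fin d)}
    (hv0 : #{i | v i ≠ 0} ≤ k) (hv : ‖v‖ ≤ 1) :
    ⟪u, v⟫ ≤ √(∑ i ∈ Icc 1 k, zD u i ^ 2) := by
  obtain ⟨J, hvJ, -, hJ⟩ := exists_subsuperset_card_eq (subset_univ _) hv0 (by simpa using hkd)
  have hv_sum : ⟪u, v⟫ = ∑ i ∈ J, v i * u i := by
    rw [PiLp.inner_apply]
    refine (sum_subset (subset_univ J) fun i _ hi => ?_).symm
    have hvi : v i = 0 := by_contra fun h => hi (hvJ (by simpa using h))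
    simp [hvi]
  have hvJ_norm : √(∑ i ∈ J, v i ^ 2) ≤ 1 := by
    refine (Real.sqrt_le_sqrt (sum_le_sum_of_subset_of_nonneg (subset_univ J)
      fun i _ _ => sq_nonneg (v i))).trans ?_
    rwa [← EuclideanSpace.real_norm_sq_eq, Real.sqrt_sq (norm_nonneg v)]
  calc ⟪u, v⟫ = ∑ i ∈ J, v i * u i := hv_sum
    _ ≤ √(∑ i ∈ J, v i ^ 2) * √(∑ i ∈ J, u i ^ 2) := Real.sum_mul_le_sqrt_mul_sqrt _ _ _
    _ ≤ 1 * √(∑ i ∈ Icc 1 k, zD u i ^ 2) := by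
      gcongr
      exact sum_sq_le_sum_zD_sq u hkd hJ
    _ = √(∑ i ∈ Icc 1 k, zD u i ^ 2) := one_mul _

theorem inner_le_of_kSupNorm_le_one (hk : 1 ≤ k) (hkd : k ≤ d) {w : EuclideanSpace ℝ (Fin d)}
    (hw : kSupNorm d k w ≤ 1) : ⟪u, w⟫ ≤ √(∑ i ∈ Icc 1 k, zD u i ^ 2) := by
  have hball : ∀ v ∈ kSupBall d k, ⟪u, v⟫ ≤ √(∑ i ∈ Icc 1 k, zD u i ^ 2) :=
    convexHull_min (fun v ⟨hv0, hv⟩ => inner_le_of_card_support_le u hkd hv0 hv)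
      (convex_halfSpace_le (innerₛₗ ℝ u).isLinear _)
  exact le_of_gauge_le_one_of_forall_le (convex_convexHull ℝ _) zero_mem_kSupBall
    (absorbent_nhds_zero (kSupBall_mem_nhds_zero hk)) (continuous_const.inner continuous_id)
    hball hw

theorem exists_mem_kSupBall_inner_eq {I : Finset (Fin d)} (hI : #I ≤ k) :
    ∃ w ∈ kSupBall d k, ⟪u, w⟫ = √(∑ i ∈ I, u i ^ 2) := by
  let v : EuclideanSpace ℝ (Fin d) := WithLp.toLp 2 fun i => if i ∈ I then u i else 0
  have hv_norm : ‖v‖ = √(∑ i ∈ I, u i ^ 2) := by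
    rw [EuclideanSpace.norm_eq]
    simp [v, apply_ite, sum_ite_mem]
  have hv_inner : ⟪u, v⟫ = ‖v‖ ^ 2 := by
    rw [hv_norm, Real.sq_sqrt (sum_nonneg fun i _ => sq_nonneg (u i))]
    simp [PiLp.inner_apply, v, sq]
  refine ⟨‖v‖⁻¹ • v, mem_kSupBall_of_card_support_le ?_ ?_, ?_⟩
  · refine (card_le_card fun i => ?_).trans hI
    simp +contextual [v]
  · rw [norm_smul, norm_inv, norm_norm]
    exact inv_mul_le_one_of_le₀ le_rfl (norm_nonneg v)
  · rw [inner_smul_right, hv_inner, sq, ← mul_assoc, inv_mul_mul_self, hv_norm]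

end KSupport

/-- the dual norm of the k-support norm is the ℓ2 norm of the
k largest-magnitude entries: `sup{⟨w,u⟩ : ‖w‖ₖˢᵖ ≤ 1} = max{(∑_{i∈I} uᵢ²)^½ : |I| = k}
= (∑_{i=1}^k (|u|↓ᵢ)²)^½`. -/
theorem statement0 (d k : ℕ) (hk1 : 1 ≤ k) (hkd : k ≤ d) (u : EuclideanSpace ℝ (Fin d)) :
    sSup {x : ℝ | ∃ w : EuclideanSpace ℝ (Fin d), kSupNorm d k w ≤ 1 ∧ x = ∑ i, w i * u i}
      = sSup {x : ℝ | ∃ I : Finset (Fin d), I.card = k ∧ x = Real.sqrt (∑ i ∈ I, u i ^ 2)} ∧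
    sSup {x : ℝ | ∃ I : Finset (Fin d), I.card = k ∧ x = Real.sqrt (∑ i ∈ I, u i ^ 2)}
      = Real.sqrt (∑ i ∈ Finset.Icc 1 k, zD u i ^ 2) := by
  obtain ⟨T, hT, -, hT_sum⟩ := exists_top_indices u hkd
  have hS : IsGreatest {x : ℝ | ∃ I : Finset (Fin d), #I = k ∧ x = √(∑ i ∈ I, u i ^ 2)}
      √(∑ i ∈ Icc 1 k, zD u i ^ 2) := by
    refine ⟨⟨T, hT, by rw [hT_sum]⟩, ?_⟩
    rintro _ ⟨I, hI, rfl⟩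
    exact Real.sqrt_le_sqrt (sum_sq_le_sum_zD_sq u hkd hI)
  have hL : IsGreatest {x : ℝ | ∃ w : EuclideanSpace ℝ (Fin d), kSupNorm d k w ≤ 1 ∧
      x = ∑ i, w i * u i} √(∑ i ∈ Icc 1 k, zD u i ^ 2) := by
    obtain ⟨w, hw, hw_inner⟩ := exists_mem_kSupBall_inner_eq u hT.le
    refine ⟨⟨w, gauge_le_one_of_mem hw, by rw [← hT_sum, ← hw_inner, PiLp.inner_apply]; rfl⟩, ?_⟩
    rintro _ ⟨w, hw, rfl⟩
    exact inner_le_of_kSupNorm_le_one u hk1 hkd hw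
  exact ⟨by rw [hL.csSup_eq, hS.csSup_eq], hS.csSup_eq⟩
end

section
/- Let 1 ≤ k ≤ d be integers and z_1 ≥ z_2 ≥ … ≥ z_d ≥ 0 real numbers, and suppose r ∈ {0, …, k−1} satisfies z_{k−r−1} > (1/(r+1)) ∑_{i=k−r}^d z_i ≥ z_{k−r} (with the convention z_0 = +∞). Then max{ ∑_{i=1}^{k−1} α_i z_i + α_k ∑_{i=k}^d z_i − (1/2) ∑_{i=1}^k α_i² : α_1 ≥ α_2 ≥ … ≥ α_k ≥ 0 } = (1/2)( ∑_{i=1}^{k−r−1} z_i² + (1/(r+1)) ( ∑_{i=k−r}^d z_i )² ), and the maximum is attained at α_i = z_i for i = 1, …, k−r−1 and α_i = (1/(r+1)) ∑_{j=k−r}^d z_j for i = k−r, …, k. -/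
/-!
Write the objective as `F(α) = ∑_{i=1}^k (αᵢ wᵢ - αᵢ²/2)` with `wᵢ = zᵢ` for `i < k` and
`w_k = ∑_{i ≥ k} zᵢ`, and let `A` be the claimed maximiser: `Aᵢ = wᵢ` on the first
`p = k - r - 1` coordinates and the block average `m` of `w` on the last `r + 1`.
Completing the square, `F(α) - F(A) ≤ ∑_{i > p} (αᵢ - m)(wᵢ - m)`. On that block `wᵢ ≤ m` for
`i < k` while `αᵢ ≥ α_k`, so each term is at most `(α_k - m)(wᵢ - m)`, and these sum to zero
because `m` is the average of `w` over the block.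
-/

open Finset

theorem sum_sub_mul_sub_nonpos {ι : Type*} (t : Finset ι) (α w : ι → ℝ) (c m : ℝ)
    (hw : ∑ i ∈ t, w i = #t * m) (h : ∀ i ∈ t, (α i - c) * (w i - m) ≤ 0) :
    ∑ i ∈ t, (α i - m) * (w i - m) ≤ 0 := by
  have hdev : ∑ i ∈ t, (w i - m) = 0 := by
    rw [sum_sub_distrib, sum_const, nsmul_eq_mul, hw, sub_self]
  calc ∑ i ∈ t, (α i - m) * (w i - m)
      = ∑ i ∈ t, (α i - c) * (w i - m) + (c - m) * ∑ i ∈ t, (w i - m) := by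
        rw [mul_sum, ← sum_add_distrib]
        exact sum_congr rfl fun i _ => by ring
    _ ≤ 0 := by
        rw [hdev, mul_zero, add_zero]
        exact sum_nonpos h

section Pooled

variable {ι : Type*} [DecidableEq ι] {s t : Finset ι} {w A : ι → ℝ} {m : ℝ}

theorem sum_mul_sub_sq_le_of_pooled (hst : Disjoint s t) (hAs : ∀ i ∈ s, A i = w i)
    (hAt : ∀ i ∈ t, A i = m) (hw : ∑ i ∈ t, w i = #t * m) (α : ι → ℝ) (c : ℝ)
    (hα : ∀ i ∈ t, (α i - c) * (w i - m) ≤ 0) :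
    ∑ i ∈ s ∪ t, (α i * w i - α i ^ 2 / 2) ≤ ∑ i ∈ s ∪ t, (A i * w i - A i ^ 2 / 2) := by
  have hcross : ∑ i ∈ s ∪ t, (α i - A i) * (w i - A i) ≤ 0 := by
    rw [sum_union hst, sum_eq_zero fun i hi => by rw [hAs i hi, sub_self, mul_zero], zero_add,
      sum_congr rfl fun i hi => by rw [hAt i hi]]
    exact sum_sub_mul_sub_nonpos t α w c m hw hα
  calc ∑ i ∈ s ∪ t, (α i * w i - α i ^ 2 / 2)
      ≤ ∑ i ∈ s ∪ t, ((A i * w i - A i ^ 2 / 2) + (α i - A i) * (w i - A i)) :=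
        sum_le_sum fun i _ => by nlinarith [sq_nonneg (α i - A i)]
    _ ≤ ∑ i ∈ s ∪ t, (A i * w i - A i ^ 2 / 2) := by
        rw [sum_add_distrib]
        linarith

theorem sum_mul_sub_sq_of_pooled (hst : Disjoint s t) (hAs : ∀ i ∈ s, A i = w i)
    (hAt : ∀ i ∈ t, A i = m) (hw : ∑ i ∈ t, w i = #t * m) :
    ∑ i ∈ s ∪ t, (A i * w i - A i ^ 2 / 2) = (∑ i ∈ s, w i ^ 2 + #t * m ^ 2) / 2 := by
  have hs : ∑ i ∈ s, (A i * w i - A i ^ 2 / 2) = ∑ i ∈ s, w i ^ 2 / 2 :=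
    sum_congr rfl fun i hi => by rw [hAs i hi]; ring
  have ht : ∑ i ∈ t, (A i * w i - A i ^ 2 / 2) = m * ∑ i ∈ t, w i - #t * m ^ 2 / 2 := by
    rw [sum_congr rfl fun i hi => by rw [hAt i hi], sum_sub_distrib, ← mul_sum, sum_const,
      nsmul_eq_mul]
    ring
  rw [sum_union hst, hs, ht, hw, ← sum_div]
  ring

end Pooled

theorem Nat.Icc_eq_Icc_union_Icc_add_one {a p b : ℕ} (hap : a ≤ p + 1) (hpb : p ≤ b) :
    Icc a b = Icc a p ∪ Icc (p + 1) b := by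
  ext; simp only [mem_Icc, mem_union]; omega

theorem Nat.disjoint_Icc_Icc_add_one (a p b : ℕ) : Disjoint (Icc a p) (Icc (p + 1) b) :=
  disjoint_left.2 fun i hi hi' => by simp only [mem_Icc] at hi hi'; omega

section Block

variable {p k : ℕ} {w A : ℕ → ℝ} {m : ℝ}

theorem sum_Icc_mul_sub_sq_le_of_block (hpk : p < k) (hAs : ∀ i ∈ Icc 1 p, A i = w i)
    (hAt : ∀ i ∈ Icc (p + 1) k, A i = m) (hw : ∑ i ∈ Icc (p + 1) k, w i = (k - p : ℕ) * m)
    (hblock : ∀ i ∈ Ico (p + 1) k, w i ≤ m) (α : ℕ → ℝ)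
    (hα : ∀ i j : ℕ, 1 ≤ i → i ≤ j → j ≤ k → α j ≤ α i) :
    ∑ i ∈ Icc 1 k, (α i * w i - α i ^ 2 / 2) ≤ ∑ i ∈ Icc 1 k, (A i * w i - A i ^ 2 / 2) := by
  rw [Nat.Icc_eq_Icc_union_Icc_add_one (by omega) hpk.le]
  refine sum_mul_sub_sq_le_of_pooled (Nat.disjoint_Icc_Icc_add_one 1 p k) hAs hAt
    (by simpa using hw) α (α k) fun i hi => ?_
  rcases (mem_Icc.1 hi).2.eq_or_lt with rfl | hik
  · simp
  have hi' : i ∈ Ico (p + 1) k := mem_Ico.2 ⟨(mem_Icc.1 hi).1, hik⟩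
  exact mul_nonpos_of_nonneg_of_nonpos
    (sub_nonneg.2 (hα i k (by simp only [mem_Icc] at hi; omega) hik.le le_rfl)) (sub_nonpos.2 (hblock i hi'))

theorem sum_Icc_mul_sub_sq_of_block (hpk : p < k) (hAs : ∀ i ∈ Icc 1 p, A i = w i)
    (hAt : ∀ i ∈ Icc (p + 1) k, A i = m) (hw : ∑ i ∈ Icc (p + 1) k, w i = (k - p : ℕ) * m) :
    ∑ i ∈ Icc 1 k, (A i * w i - A i ^ 2 / 2)
      = (∑ i ∈ Icc 1 p, w i ^ 2 + (k - p : ℕ) * m ^ 2) / 2 := by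
  rw [Nat.Icc_eq_Icc_union_Icc_add_one (by omega) hpk.le,
    sum_mul_sub_sq_of_pooled (Nat.disjoint_Icc_Icc_add_one 1 p k) hAs hAt (by simpa using hw)]
  simp

end Block

theorem objective_eq_sum_update {k : ℕ} (hk : 1 ≤ k) (d : ℕ) (z α : ℕ → ℝ) :
    ∑ i ∈ Icc 1 (k - 1), α i * z i + α k * ∑ i ∈ Icc k d, z i
        - (1 / 2) * ∑ i ∈ Icc 1 k, α i ^ 2
      = ∑ i ∈ Icc 1 k,
          (α i * Function.update z k (∑ j ∈ Icc k d, z j) i - α i ^ 2 / 2) := by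
  obtain ⟨n, rfl⟩ : ∃ n, k = n + 1 := ⟨k - 1, by omega⟩
  have hbelow : ∑ i ∈ Icc 1 n, α i * Function.update z (n + 1) (∑ j ∈ Icc (n + 1) d, z j) i
      = ∑ i ∈ Icc 1 n, α i * z i :=
    sum_congr rfl fun i hi => by rw [Function.update_of_ne (by simp only [mem_Icc] at hi; omega)]
  rw [Nat.add_sub_cancel, sum_sub_distrib, ← sum_div, sum_Icc_succ_top (by omega),
    sum_Icc_succ_top (by omega), hbelow, Function.update_self]
  ring

theorem sum_Icc_update_top {p k d : ℕ} (hpk : p < k) (hkd : k ≤ d + 1) (z : ℕ → ℝ) :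
    ∑ i ∈ Icc (p + 1) k, Function.update z k (∑ j ∈ Icc k d, z j) i
      = ∑ i ∈ Icc (p + 1) d, z i := by
  obtain ⟨n, rfl⟩ : ∃ n, k = n + 1 := ⟨k - 1, by omega⟩
  rw [sum_Icc_succ_top (by omega), Function.update_self,
    Nat.Icc_eq_Icc_union_Icc_add_one (by omega : p + 1 ≤ n + 1) (by omega : n ≤ d),
    sum_union (Nat.disjoint_Icc_Icc_add_one _ _ _)]
  exact congrArg (· + _) (sum_congr rfl fun i hi =>
    Function.update_of_ne (by simp only [mem_Icc] at hi; omega) _ _)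

theorem ite_le_ite_of_antitone {n p : ℕ} (hpn : p ≤ n) {z : ℕ → ℝ}
    (hmono : ∀ i j : ℕ, 1 ≤ i → i ≤ j → j ≤ n → z j ≤ z i) {m : ℝ} (hpm : p = 0 ∨ m < z p)
    {i j : ℕ} (hi : 1 ≤ i) (hij : i ≤ j) :
    (if j ≤ p then z j else m) ≤ if i ≤ p then z i else m := by
  by_cases hjp : j ≤ p
  · simp [hjp, hij.trans hjp, hmono i j hi hij (by omega)]
  by_cases hip : i ≤ p
  · have hzp : z p ≤ z i := hmono i p hi hip hpn
    rcases hpm with hp0 | hmp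
    · omega
    · simp only [hjp, hip, if_true, if_false]; linarith
  · simp [hjp, hip]

/-- for `z_1 ≥ … ≥ z_d ≥ 0` and `r ∈ {0,…,k−1}` satisfying
`z_{k−r−1} > (1/(r+1)) ∑_{i=k−r}^d z_i ≥ z_{k−r}` (with `z_0 = +∞`, i.e. the left
inequality is vacuous when `r = k−1`), the maximum of
`∑_{i=1}^{k−1} αᵢ zᵢ + α_k ∑_{i=k}^d zᵢ − ½ ∑_{i=1}^k αᵢ²` over nonincreasing
nonnegative `α_1 ≥ … ≥ α_k ≥ 0` equals
`½(∑_{i=1}^{k−r−1} zᵢ² + (1/(r+1))(∑_{i=k−r}^d zᵢ)²)`, and it is attained at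
`αᵢ = zᵢ` for `i ≤ k−r−1` and `αᵢ = (1/(r+1)) ∑_{j=k−r}^d z_j` otherwise. -/
theorem statement2 (d k : ℕ) (hk1 : 1 ≤ k) (hkd : k ≤ d) (z : ℕ → ℝ)
    (hmono : ∀ i j : ℕ, 1 ≤ i → i ≤ j → j ≤ d → z j ≤ z i) (hnn : 0 ≤ z d)
    (r : ℕ) (hr : r < k)
    (hc1 : r = k - 1 ∨ (∑ i ∈ Finset.Icc (k - r) d, z i) / ((r : ℝ) + 1) < z (k - r - 1))
    (hc2 : z (k - r) ≤ (∑ i ∈ Finset.Icc (k - r) d, z i) / ((r : ℝ) + 1)) :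
    IsGreatest
      ((fun α : ℕ → ℝ => ∑ i ∈ Finset.Icc 1 (k - 1), α i * z i
          + α k * ∑ i ∈ Finset.Icc k d, z i
          - (1 / 2) * ∑ i ∈ Finset.Icc 1 k, α i ^ 2) ''
        {α : ℕ → ℝ | (∀ i j : ℕ, 1 ≤ i → i ≤ j → j ≤ k → α j ≤ α i) ∧ 0 ≤ α k})
      ((1 / 2) * (∑ i ∈ Finset.Icc 1 (k - r - 1), z i ^ 2
          + (∑ i ∈ Finset.Icc (k - r) d, z i) ^ 2 / ((r : ℝ) + 1))) ∧
    (fun α : ℕ → ℝ => ∑ i ∈ Finset.Icc 1 (k - 1), α i * z i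
          + α k * ∑ i ∈ Finset.Icc k d, z i
          - (1 / 2) * ∑ i ∈ Finset.Icc 1 k, α i ^ 2)
      (fun i => if i ≤ k - r - 1 then z i
          else (∑ j ∈ Finset.Icc (k - r) d, z j) / ((r : ℝ) + 1))
      = (1 / 2) * (∑ i ∈ Finset.Icc 1 (k - r - 1), z i ^ 2
          + (∑ i ∈ Finset.Icc (k - r) d, z i) ^ 2 / ((r : ℝ) + 1)) := by
  set p := k - r - 1
  have hp : k - r = p + 1 := by omega
  rw [hp] at hc2 hc1 ⊢
  set S := ∑ i ∈ Icc (p + 1) d, z i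
  set m := S / ((r : ℝ) + 1)
  set w := Function.update z k (∑ j ∈ Icc k d, z j)
  set A : ℕ → ℝ := fun i => if i ≤ p then z i else m
  simp only [objective_eq_sum_update hk1]
  have hw_below : ∀ i < k, w i = z i := fun i hi => Function.update_of_ne hi.ne _ _
  have hAs : ∀ i ∈ Icc 1 p, A i = w i := fun i hi => by
    simp only [mem_Icc] at hi; simp [A, hi.2, hw_below i (by omega)]
  have hAt : ∀ i ∈ Icc (p + 1) k, A i = m := fun i hi => by
    simp only [mem_Icc] at hi; simp [A, show ¬ i ≤ p by omega]
  have hlen : ((k - p : ℕ) : ℝ) = r + 1 := by rw [show k - p = r + 1 by omega]; push_cast; rfl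
  have hw : ∑ i ∈ Icc (p + 1) k, w i = (k - p : ℕ) * m := by
    rw [sum_Icc_update_top (by omega) (by omega), hlen, mul_div_cancel₀ S (by positivity)]
  have hval : ∑ i ∈ Icc 1 k, (A i * w i - A i ^ 2 / 2)
      = 1 / 2 * (∑ i ∈ Icc 1 p, z i ^ 2 + S ^ 2 / ((r : ℝ) + 1)) := by
    rw [sum_Icc_mul_sub_sq_of_block (by omega) hAs hAt hw, hlen,
      sum_congr rfl fun i hi => by rw [hw_below i (by simp only [mem_Icc] at hi; omega)]]
    simp only [m]; field_simp
  have hm0 : 0 ≤ m := (hnn.trans (hmono (p + 1) d (by omega) (by omega) le_rfl)).trans hc2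
  have hA : A ∈ {α : ℕ → ℝ | (∀ i j : ℕ, 1 ≤ i → i ≤ j → j ≤ k → α j ≤ α i) ∧ 0 ≤ α k} :=
    ⟨fun i j hi hij _ =>
      ite_le_ite_of_antitone (by omega) hmono (hc1.imp_left fun _ => by omega) hi hij,
      by simpa [A, show ¬ k ≤ p by omega] using hm0⟩
  have hblock : ∀ i ∈ Ico (p + 1) k, w i ≤ m := fun i hi => by
    simp only [mem_Ico] at hi
    rw [hw_below i hi.2]
    exact (hmono (p + 1) i (by omega) hi.1 (by omega)).trans hc2
  refine ⟨⟨⟨A, hA, hval⟩, ?_⟩, hval⟩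
  rintro _ ⟨α, ⟨hα, -⟩, rfl⟩
  exact hval ▸ sum_Icc_mul_sub_sq_le_of_block (by omega) hAs hAt hw hblock α hα
end

section
/- For every integer 1 ≤ k ≤ d and every w ∈ ℝ^d, ‖w‖_k^el ≤ ‖w‖_k^sp ≤ √2 · ‖w‖_k^el, and moreover the second inequality is strict whenever w ≠ 0: ‖w‖_k^sp < √2 · ‖w‖_k^el for w ≠ 0. -/
open Finset Matrix
open scoped Pointwise

def sparseBall (ι : Type*) [Fintype ι] (k : ℕ) (R : ℝ) : Set (EuclideanSpace ℝ ι) :=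
  {v | #{i | v i ≠ 0} ≤ k ∧ ‖v‖ ≤ R}

def indicatorsOfCard (ι : Type*) [DecidableEq ι] (m : ℕ) : Set (ι → ℝ) :=
  {x | ∃ s : Finset ι, #s = m ∧ x = fun i => if i ∈ s then 1 else 0}

section

variable {ι : Type*} [Fintype ι]

lemma sum_ite_mem_const [DecidableEq ι] (s : Finset ι) (a b : ℝ) :
    ∑ j, (if j ∈ s then a else b) = #s * a + #sᶜ * b := by
  rw [sum_ite]
  simp [filter_notMem_eq_sdiff, compl_eq_univ_sdiff]

lemma exists_mem_doublyStochastic_mulVec_eq [DecidableEq ι] {u : ι → ℝ} {s : Finset ι}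
    (h0 : 0 ≤ u) (h1 : u ≤ 1) (hsum : ∑ i, u i = #s) :
    ∃ M ∈ doublyStochastic ℝ ι, M *ᵥ (fun j => if j ∈ s then 1 else 0) = u := by
  have hsumc : ∑ i, (1 - u i) = #sᶜ := by
    simp [sum_sub_distrib, hsum, card_compl, Nat.cast_sub (card_le_univ s)]
  -- The divisions below are by zero only when `u = 0` (`#s = 0`) or `u = 1` (`#sᶜ = 0`).
  have hzero (i : ι) : (#s : ℝ) = 0 → u i = 0 := fun h =>
    (sum_eq_zero_iff_of_nonneg fun i _ => h0 i).1 (hsum.trans h) i (mem_univ i)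
  have hone (i : ι) : (#sᶜ : ℝ) = 0 → 1 - u i = 0 := fun h =>
    (sum_eq_zero_iff_of_nonneg fun i _ => sub_nonneg.2 (h1 i)).1 (hsumc.trans h) i (mem_univ i)
  refine ⟨of fun i j => if j ∈ s then u i / #s else (1 - u i) / #sᶜ, ?_, ?_⟩
  · refine mem_doublyStochastic_iff_sum.2 ⟨fun i j => ?_, fun i => ?_, fun j => ?_⟩
    · simp only [of_apply]
      split_ifs
      exacts [div_nonneg (h0 i) (Nat.cast_nonneg _),
        div_nonneg (sub_nonneg.2 (h1 i)) (Nat.cast_nonneg _)]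
    · simp only [of_apply]
      rw [sum_ite_mem_const, ← mul_div_assoc, ← mul_div_assoc,
        mul_div_cancel_left_of_imp (hzero i), mul_div_cancel_left_of_imp (hone i)]
      ring
    · by_cases hj : j ∈ s
      · have : (#s : ℝ) ≠ 0 := Nat.cast_ne_zero.2 (card_ne_zero_of_mem hj)
        simp [hj, ← sum_div, hsum, this]
      · have : (#sᶜ : ℝ) ≠ 0 := Nat.cast_ne_zero.2 (card_ne_zero_of_mem (mem_compl.2 hj))
        simp [hj, ← sum_div, hsumc, this]
  · ext i
    simp only [mulVec, dotProduct, of_apply, mul_ite, mul_one, mul_zero, sum_ite_mem, univ_inter]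
    rw [sum_ite_of_true fun _ h => h, sum_const, nsmul_eq_mul, ← mul_div_assoc,
      mul_div_cancel_left_of_imp (hzero i)]

lemma mem_convexHull_indicatorsOfCard_of_sum_eq [DecidableEq ι] {u : ι → ℝ} {m : ℕ}
    (h0 : 0 ≤ u) (h1 : u ≤ 1) (hsum : ∑ i, u i = m) :
    u ∈ convexHull ℝ (indicatorsOfCard ι m) := by
  have hm : m ≤ Fintype.card ι := by
    have := sum_le_sum fun i (_ : i ∈ univ) => h1 i
    simp only [hsum, Pi.one_apply, sum_const, card_univ, nsmul_eq_mul, mul_one] at this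
    exact_mod_cast this
  obtain ⟨s, -, rfl⟩ := exists_subset_card_eq (s := univ) hm
  obtain ⟨M, hM, rfl⟩ := exists_mem_doublyStochastic_mulVec_eq h0 h1 hsum
  rw [← SetLike.mem_coe, doublyStochastic_eq_convexHull_permMatrix] at hM
  have := Set.mem_image_of_mem
    ((mulVecBilin ℝ ℝ).flip fun j => if j ∈ s then (1 : ℝ) else 0) hM
  rw [LinearMap.image_convexHull] at this
  refine convexHull_mono ?_ this
  rintro _ ⟨_, ⟨σ, rfl⟩, rfl⟩
  refine ⟨s.map σ.symm.toEmbedding, card_map _, ?_⟩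
  ext i
  simp [permMatrix_mulVec, mem_map_equiv]

lemma exists_head_tail_threshold [DecidableEq ι] {z : ι → ℝ} (hz : 0 ≤ z) {k : ℕ}
    (hk : 0 < k) :
    ∃ (H : Finset ι) (m : ℕ) (θ : ℝ), 0 < m ∧ #H + m = k ∧ 0 ≤ θ ∧
      ∑ i ∈ Hᶜ, z i = m * θ ∧ (∀ i ∈ H, θ ≤ z i) ∧ ∀ i ∉ H, z i ≤ θ := by
  let IsHead : Finset ι → Prop := fun H =>
    ∃ m : ℕ, 0 < m ∧ #H + m = k ∧ ∀ i ∈ H, ∑ j ∈ Hᶜ, z j ≤ m * z i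
  obtain ⟨H, ⟨m, hm, hHm, hhead⟩, hmax⟩ :=
    Set.exists_max_image {H | IsHead H} card (Set.toFinite _) ⟨∅, k, hk, by simp, by simp⟩
  set T := ∑ j ∈ Hᶜ, z j
  have hm' : (0 : ℝ) < m := by exact_mod_cast hm
  refine ⟨H, m, T / m, hm, hHm, div_nonneg (sum_nonneg fun j _ => hz j) hm'.le,
    (mul_div_cancel₀ _ hm'.ne').symm, fun i hi => ?_, fun i hi => ?_⟩
  · rw [div_le_iff₀ hm', mul_comm]
    exact hhead i hi
  -- A head of maximal size passes the tail test: otherwise adding `i` gives a larger head.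
  rw [le_div_iff₀ hm']
  by_contra! hlt
  have hiT : z i ≤ T := single_le_sum (fun j _ => hz j) (mem_compl.2 hi)
  obtain ⟨n, rfl⟩ : ∃ n, m = n + 1 := ⟨m - 1, by omega⟩
  push_cast at hlt hhead
  have hn : 0 < n := Nat.pos_of_ne_zero fun h => by
    rw [h, Nat.cast_zero, zero_add, mul_one] at hlt
    linarith
  have hn' : (0 : ℝ) < n := by exact_mod_cast hn
  have hinsert : IsHead (insert i H) := by
    refine ⟨n, hn, by rw [card_insert_of_notMem hi]; omega, fun j hj => ?_⟩
    rw [compl_insert, sum_erase_eq_sub (mem_compl.2 hi)]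
    rcases mem_insert.1 hj with rfl | hj
    · linarith
    · nlinarith [mul_le_mul_of_nonneg_left (hhead j hj) hn'.le]
  have := hmax _ hinsert
  rw [card_insert_of_notMem hi] at this
  omega

lemma sum_sq_add_mul_sq_lt_two_mul_sq [DecidableEq ι] {z : ι → ℝ} {H : Finset ι} {m k : ℕ}
    {θ e : ℝ} (hm : 0 < m) (hk : #H + m = k) (hθ : 0 ≤ θ)
    (htail : ∑ i ∈ Hᶜ, z i = m * θ) (hhead : ∀ i ∈ H, θ ≤ z i) (he : 0 < e)
    (h2 : ∑ i, z i ^ 2 ≤ e ^ 2) (h1 : (∑ i, z i) ^ 2 ≤ k * e ^ 2) :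
    ∑ i ∈ H, z i ^ 2 + m * θ ^ 2 < 2 * e ^ 2 := by
  have hk' : (k : ℝ) = #H + m := by exact_mod_cast hk.symm
  have hk0 : (0 : ℝ) < k := by exact_mod_cast (show 0 < k by omega)
  have hkθ : k * θ ≤ ∑ i, z i := by
    have := card_nsmul_le_sum H z θ hhead
    rw [nsmul_eq_mul] at this
    rw [← sum_add_sum_compl H, htail, hk']
    linarith
  have hkθ2 : k * θ ^ 2 ≤ e ^ 2 := by
    refine le_of_mul_le_mul_left ?_ hk0
    calc k * (k * θ ^ 2) = (k * θ) ^ 2 := by ring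
      _ ≤ (∑ i, z i) ^ 2 := pow_le_pow_left₀ (by positivity) hkθ 2
      _ ≤ k * e ^ 2 := h1
  have hmθ : m * θ ^ 2 ≤ e ^ 2 :=
    (mul_le_mul_of_nonneg_right (by exact_mod_cast (show m ≤ k by omega)) (sq_nonneg θ)).trans
      hkθ2
  have hsq := sum_add_sum_compl H fun i => z i ^ 2
  have hcompl : 0 ≤ ∑ i ∈ Hᶜ, z i ^ 2 := sum_nonneg fun i _ => sq_nonneg _
  rcases hθ.eq_or_lt with rfl | hθ
  · nlinarith
  · obtain ⟨i, hi, hzi⟩ := exists_lt_of_sum_lt (f := fun _ => (0 : ℝ)) (s := Hᶜ)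
      (by rw [htail, sum_const_zero]; positivity)
    have : 0 < ∑ i ∈ Hᶜ, z i ^ 2 :=
      sum_pos' (fun i _ => sq_nonneg _) ⟨i, hi, by positivity⟩
    linarith

lemma norm_le_of_mem_convexHull_sparseBall {k : ℕ} {R : ℝ} {w : EuclideanSpace ℝ ι}
    (hw : w ∈ convexHull ℝ (sparseBall ι k R)) : ‖w‖ ≤ R :=
  mem_closedBall_zero_iff.1 <|
    convexHull_min (fun _ hv => mem_closedBall_zero_iff.2 hv.2) (convex_closedBall 0 R) hw

lemma sum_abs_le_sqrt_card_mul_norm (v : EuclideanSpace ℝ ι) :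
    ∑ i, |v i| ≤ √(#{i | v i ≠ 0}) * ‖v‖ := by
  have hsupp : ∑ i, |v i| = ∑ i ∈ {i | v i ≠ 0}, |v i| :=
    (sum_filter_of_ne fun i _ h => abs_ne_zero.1 h).symm
  rw [hsupp, ← Real.sqrt_sq (norm_nonneg v), ← Real.sqrt_mul (Nat.cast_nonneg _)]
  refine Real.le_sqrt_of_sq_le (sq_sum_le_card_mul_sum_sq.trans ?_)
  gcongr
  rw [EuclideanSpace.norm_sq_eq]
  exact sum_le_sum_of_subset_of_nonneg (subset_univ _) fun i _ _ => by positivity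

lemma mem_sparseBall_of_head_add_indicator [DecidableEq ι] (w v : EuclideanSpace ℝ ι)
    (H s : Finset ι) {c : ι → ℝ} {θ : ℝ} (hc : ∀ i, |c i| ≤ θ)
    (hv : ∀ i, v i = if i ∈ H then w i else if i ∈ s then c i else 0) :
    v ∈ sparseBall ι (#H + #s) √(∑ i ∈ H, w i ^ 2 + #s * θ ^ 2) := by
  refine ⟨?_, ?_⟩
  · calc #{i | v i ≠ 0} ≤ #(H ∪ s) := card_le_card fun i hi => by
          by_contra h
          simp only [mem_union, not_or] at h
          simp [hv, h.1, h.2] at hi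
      _ ≤ #H + #s := card_union_le H s
  · rw [EuclideanSpace.norm_eq]
    gcongr
    calc ∑ i, ‖v i‖ ^ 2
        ≤ ∑ i, ((if i ∈ H then w i ^ 2 else 0) + if i ∈ s then θ ^ 2 else 0) := by
          refine sum_le_sum fun i _ => ?_
          rw [Real.norm_eq_abs, sq_abs, hv]
          split_ifs
          · linarith [sq_nonneg θ]
          · simp
          · rw [zero_add, ← sq_abs]
            exact pow_le_pow_left₀ (abs_nonneg _) (hc i) 2
          · simp
      _ = ∑ i ∈ H, w i ^ 2 + #s * θ ^ 2 := by simp [sum_add_distrib]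

lemma exists_affineMap_apply_eq_add_mul (a c : ι → ℝ) :
    ∃ f : (ι → ℝ) →ᵃ[ℝ] EuclideanSpace ℝ ι, ∀ x i, f x i = a i + c i * x i :=
  ⟨((WithLp.linearEquiv 2 ℝ (ι → ℝ)).symm.toLinearMap ∘ₗ LinearMap.mulLeft ℝ c).toAffineMap +
    AffineMap.const ℝ (ι → ℝ) (WithLp.toLp 2 a), fun x i => by simp [add_comm]⟩

lemma mem_convexHull_sparseBall_of_threshold [DecidableEq ι] (w : EuclideanSpace ℝ ι)
    (H : Finset ι) {m : ℕ} {θ : ℝ} (hθ : 0 ≤ θ) (htail : ∀ i ∉ H, |w i| ≤ θ)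
    (hsum : ∑ i ∈ Hᶜ, |w i| = m * θ) :
    w ∈ convexHull ℝ (sparseBall ι (#H + m) √(∑ i ∈ H, w i ^ 2 + m * θ ^ 2)) := by
  rcases hθ.eq_or_lt with rfl | hθ
  · have hw (i) (hi : i ∉ H) : w i = 0 := abs_nonpos_iff.1 (htail i hi)
    refine subset_convexHull ℝ _ ⟨?_, ?_⟩
    · calc #{i | w i ≠ 0} ≤ #H :=
            card_le_card fun i hi => by_contra fun h => (mem_filter.1 hi).2 (hw i h)
        _ ≤ #H + m := Nat.le_add_right _ _
    · rw [EuclideanSpace.norm_eq, ← sum_add_sum_compl H,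
        sum_eq_zero (s := Hᶜ) fun i hi => by simp [hw i (mem_compl.1 hi)]]
      simp
  -- `w i / |w i|` is the sign of `w i`, and `0` when `w i = 0`.
  set c : ι → ℝ := fun i => θ * (w i / |w i|)
  have hc (i : ι) : |c i| ≤ θ := by
    rw [abs_mul, abs_of_pos hθ, abs_div, abs_abs]
    exact mul_le_of_le_one_right hθ.le (div_self_le_one _)
  obtain ⟨f, hf'⟩ := exists_affineMap_apply_eq_add_mul (fun i => if i ∈ H then w i else 0)
    fun i => if i ∈ H then 0 else c i
  have hf (x : ι → ℝ) (i : ι) : f x i = if i ∈ H then w i else c i * x i := by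
    by_cases hi : i ∈ H <;> simp [hf', hi]
  let u : ι → ℝ := fun i => if i ∈ H then 0 else |w i| / θ
  have hu : u ∈ convexHull ℝ (indicatorsOfCard ι m) := by
    refine mem_convexHull_indicatorsOfCard_of_sum_eq (fun i => ?_) (fun i => ?_) ?_
    · simp only [u]; split_ifs <;> positivity
    · simp only [u]; split_ifs with hi
      · exact zero_le_one
      · exact (div_le_one hθ).2 (htail i hi)
    · simp [u, sum_ite, filter_notMem_eq_sdiff, ← compl_eq_univ_sdiff, ← sum_div, hsum,
        hθ.ne']
  have hfu : f u = w := by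
    ext i
    rw [hf]
    split_ifs with hi
    · rfl
    · rcases eq_or_ne (w i) 0 with h | h
      · simp [c, h]
      · simp only [c, u, if_neg hi]
        field_simp
  have himage : f '' indicatorsOfCard ι m ⊆
      sparseBall ι (#H + m) √(∑ i ∈ H, w i ^ 2 + m * θ ^ 2) := by
    rintro _ ⟨_, ⟨s, rfl, rfl⟩, rfl⟩
    exact mem_sparseBall_of_head_add_indicator w _ H s hc fun i => by simp [hf]
  have hfu_mem := f.image_convexHull _ ▸ Set.mem_image_of_mem f hu
  rw [hfu] at hfu_mem
  exact convexHull_mono himage hfu_mem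

end

lemma mem_smul_kSupBall_of_mem_convexHull {d k : ℕ} {R : ℝ} {w : EuclideanSpace ℝ (Fin d)}
    (hR : 0 < R) (hw : w ∈ convexHull ℝ (sparseBall (Fin d) k R)) :
    w ∈ R • kSupBall d k := by
  refine convexHull_min (fun v hv => ?_) ((convex_convexHull ℝ _).smul R) hw
  have hv' : R⁻¹ • v ∈ sparseBall (Fin d) k 1 := by
    refine ⟨by simpa [hR.ne'] using hv.1, ?_⟩
    rw [norm_smul, Real.norm_of_nonneg (inv_nonneg.2 hR.le), inv_mul_le_one₀ hR]
    exact hv.2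
  exact ⟨R⁻¹ • v, subset_convexHull ℝ _ hv', by simp [smul_smul, hR.ne']⟩

lemma elNet_smul {d k : ℕ} {c : ℝ} (hc : 0 ≤ c) (v : EuclideanSpace ℝ (Fin d)) :
    elNet d k (c • v) = c * elNet d k v := by
  simp only [elNet, norm_smul, Real.norm_of_nonneg hc, PiLp.smul_apply, smul_eq_mul, abs_mul,
    abs_of_nonneg hc, ← mul_sum, mul_div_assoc, mul_max_of_nonneg _ _ hc]

lemma elNet_add_le {d k : ℕ} (v w : EuclideanSpace ℝ (Fin d)) :
    elNet d k (v + w) ≤ elNet d k v + elNet d k w := by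
  have hl1 : ∑ i, |(v + w) i| ≤ ∑ i, |v i| + ∑ i, |w i| := by
    rw [← sum_add_distrib]
    exact sum_le_sum fun i _ => abs_add_le (v i) (w i)
  refine max_le ((norm_add_le v w).trans (add_le_add (le_max_left _ _) (le_max_left _ _))) ?_
  calc (∑ i, |(v + w) i|) / √k ≤ (∑ i, |v i|) / √k + (∑ i, |w i|) / √k := by
        rw [← add_div]; gcongr
    _ ≤ elNet d k v + elNet d k w := add_le_add (le_max_right _ _) (le_max_right _ _)

lemma convex_setOf_elNet_le (d k : ℕ) (r : ℝ) :
    Convex ℝ {v : EuclideanSpace ℝ (Fin d) | elNet d k v ≤ r} := by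
  intro v hv w hw a b ha hb hab
  calc elNet d k (a • v + b • w) ≤ a * elNet d k v + b * elNet d k w := by
        rw [← elNet_smul ha, ← elNet_smul hb]; exact elNet_add_le _ _
    _ ≤ a * r + b * r := by gcongr; exacts [hv, hw]
    _ = r := by rw [← add_mul, hab, one_mul]

lemma elNet_le_one_of_mem_kSupBall {d k : ℕ} (hk : 1 ≤ k) {v : EuclideanSpace ℝ (Fin d)}
    (hv : v ∈ kSupBall d k) : elNet d k v ≤ 1 := by
  refine convexHull_min (fun x hx => max_le hx.2 ?_) (convex_setOf_elNet_le d k 1) hv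
  rw [div_le_one (Real.sqrt_pos.2 (by exact_mod_cast hk))]
  calc ∑ i, |x i| ≤ √(#{i | x i ≠ 0}) * ‖x‖ := sum_abs_le_sqrt_card_mul_norm x
    _ ≤ √k * 1 := by gcongr; exacts [hx.1, hx.2]
    _ = √k := mul_one _

lemma elNet_le_kSupNorm {d k : ℕ} (hk : 1 ≤ k) {w : EuclideanSpace ℝ (Fin d)}
    (hw : ∃ r : ℝ, 0 < r ∧ w ∈ r • kSupBall d k) : elNet d k w ≤ kSupNorm d k w := by
  obtain ⟨r₀, hr₀⟩ := hw
  refine le_csInf ⟨r₀, hr₀⟩ ?_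
  rintro r ⟨hr, v, hv, rfl⟩
  rw [elNet_smul hr.le]
  exact mul_le_of_le_one_right hr.le (elNet_le_one_of_mem_kSupBall hk hv)

lemma exists_mem_smul_kSupBall_lt_sqrt_two_mul_elNet {d k : ℕ} (hk : 1 ≤ k)
    {w : EuclideanSpace ℝ (Fin d)} (hw : w ≠ 0) :
    ∃ R, 0 < R ∧ R < √2 * elNet d k w ∧ w ∈ R • kSupBall d k := by
  obtain ⟨H, m, θ, hm, hHm, hθ, hsum, hhead, htail⟩ :=
    exists_head_tail_threshold (z := fun i => |w i|) (fun i => abs_nonneg _) hk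
  have hnorm : 0 < ‖w‖ := norm_pos_iff.2 hw
  have he : 0 < elNet d k w := hnorm.trans_le (le_max_left _ _)
  have h2 : ∑ i, |w i| ^ 2 ≤ elNet d k w ^ 2 := by
    simp only [← Real.norm_eq_abs, ← EuclideanSpace.norm_sq_eq]
    gcongr
    exact le_max_left _ _
  have h1 : (∑ i, |w i|) ^ 2 ≤ k * elNet d k w ^ 2 := by
    have hl1 := (div_le_iff₀ (Real.sqrt_pos.2 (by exact_mod_cast hk))).1
      (le_max_right ‖w‖ ((∑ i, |w i|) / √k))
    calc (∑ i, |w i|) ^ 2 ≤ (elNet d k w * √k) ^ 2 := by gcongr; exact hl1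
      _ = k * elNet d k w ^ 2 := by rw [mul_pow, Real.sq_sqrt (Nat.cast_nonneg k)]; ring
  have hlt := sum_sq_add_mul_sq_lt_two_mul_sq hm hHm hθ hsum hhead he h2 h1
  simp only [sq_abs] at hlt
  have hmem := mem_convexHull_sparseBall_of_threshold w H hθ htail hsum
  rw [hHm] at hmem
  have hR := hnorm.trans_le (norm_le_of_mem_convexHull_sparseBall hmem)
  refine ⟨_, hR, ?_, mem_smul_kSupBall_of_mem_convexHull hR hmem⟩
  rw [Real.sqrt_lt' (by positivity), mul_pow, Real.sq_sqrt zero_le_two]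
  exact hlt

theorem statement3_general (d k : ℕ) (hk1 : 1 ≤ k) (w : EuclideanSpace ℝ (Fin d)) :
    elNet d k w ≤ kSupNorm d k w ∧
    kSupNorm d k w ≤ Real.sqrt 2 * elNet d k w ∧
    (w ≠ 0 → kSupNorm d k w < Real.sqrt 2 * elNet d k w) := by
  rcases eq_or_ne w 0 with rfl | hw
  · simp [kSupNorm, elNet]
  obtain ⟨R, hR, hRlt, hmem⟩ := exists_mem_smul_kSupBall_lt_sqrt_two_mul_elNet hk1 hw
  have hlt : kSupNorm d k w < √2 * elNet d k w := (gauge_le_of_mem hR.le hmem).trans_lt hRlt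
  exact ⟨elNet_le_kSupNorm hk1 ⟨R, hR, hmem⟩, hlt.le, fun _ => hlt⟩

/-- `‖w‖ₖᵉˡ ≤ ‖w‖ₖˢᵖ ≤ √2·‖w‖ₖᵉˡ`, with the second inequality
strict whenever `w ≠ 0`. -/
theorem statement3 (d k : ℕ) (hk1 : 1 ≤ k) (hkd : k ≤ d) (w : EuclideanSpace ℝ (Fin d)) :
    elNet d k w ≤ kSupNorm d k w ∧
    kSupNorm d k w ≤ Real.sqrt 2 * elNet d k w ∧
    (w ≠ 0 → kSupNorm d k w < Real.sqrt 2 * elNet d k w) :=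
  statement3_general d k hk1 w
end

section
/- For every integer 1 ≤ k ≤ d and every u ∈ ℝ^d, the dual norm of the elastic-net norm ‖w‖_k^el = max{‖w‖₂, ‖w‖₁/√k} is given by ‖u‖_k^{el*} = inf{ ‖a‖₂ + √k · ‖u − a‖_∞ : a ∈ ℝ^d }, where ‖u‖_k^{el*} := sup{⟨w, u⟩ : ‖w‖_k^el ≤ 1}. -/
/-!
Weak duality is Cauchy–Schwarz plus Hölder:
`⟨w, u⟩ = ⟨w, a⟩ + ⟨w, u - a⟩ ≤ ‖w‖₂ ‖a‖₂ + ‖w‖₁ ‖u - a‖_∞ ≤ ‖a‖₂ + √k ‖u - a‖_∞`.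
For the reverse inequality we exhibit `w` and `a` with equality. Let `‖u‖_∞` be attained at
`m` coordinates. If `k ≤ m`, take `a = 0` and spread `w` evenly, with the signs of `u`, over those
coordinates. Otherwise take for `a` the soft thresholding `S_τ u` of `u` and `w = a / ‖a‖₂`:
then `‖u - a‖_∞ ≤ τ` and `⟨w, u⟩ = ‖a‖₂ + τ ‖a‖₁ / ‖a‖₂`, so we need `‖a‖₁ ≤ √k ‖a‖₂` with
equality unless `τ = 0`. Just below `‖u‖_∞` the vector `S_τ u` is supported on the `m < k`
maximal coordinates, whence `‖a‖₁ ≤ √m ‖a‖₂ ≤ √k ‖a‖₂` there, and the intermediate value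
theorem in `τ` yields the right threshold.
-/

open Finset

section SoftThreshold

variable {ι : Type*}

lemma sum_mul_le_sum_abs_mul_iSup_abs [Fintype ι] (w v : ι → ℝ) :
    ∑ i, w i * v i ≤ (∑ i, |w i|) * ⨆ i, |v i| := by
  rw [sum_mul]
  refine sum_le_sum fun i _ => ?_
  calc w i * v i ≤ |w i| * |v i| := by rw [← abs_mul]; exact le_abs_self _
    _ ≤ |w i| * ⨆ i, |v i| :=
      mul_le_mul_of_nonneg_left (le_ciSup (Finite.bddAbove_range fun j => |v j|) i) (abs_nonneg _)

lemma sum_abs_le_sqrt_card_mul_norm_s4 [Fintype ι] (x : EuclideanSpace ℝ ι) {F : Finset ι}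
    (hx : ∀ i, x i ≠ 0 → i ∈ F) : ∑ i, |x i| ≤ √(#F : ℝ) * ‖x‖ := by
  have hF : ∑ i ∈ F, |x i| = ∑ i, |x i| :=
    sum_subset (subset_univ F) fun i _ hi => abs_eq_zero.mpr (not_not.mp (mt (hx i) hi))
  rw [← hF, EuclideanSpace.norm_eq]
  calc ∑ i ∈ F, |x i| = ∑ i ∈ F, 1 * |x i| := by simp
    _ ≤ √(∑ i ∈ F, 1 ^ 2) * √(∑ i ∈ F, |x i| ^ 2) :=
      Real.sum_mul_le_sqrt_mul_sqrt F (fun _ => 1) fun i => |x i|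
    _ ≤ √(#F : ℝ) * √(∑ i, ‖x i‖ ^ 2) := by
      simp only [one_pow, sum_const, nsmul_eq_mul, mul_one, Real.norm_eq_abs]
      gcongr
      exact subset_univ F

lemma abs_sign_le_one (x : ℝ) : |(SignType.sign x : ℝ)| ≤ 1 := by
  rcases lt_trichotomy x 0 with h | h | h <;> simp [h]

noncomputable def softThreshold (τ : ℝ) (u : EuclideanSpace ℝ ι) : EuclideanSpace ℝ ι :=
  WithLp.toLp 2 fun i => SignType.sign (u i) * max (|u i| - τ) 0

variable (u : EuclideanSpace ℝ ι) {τ : ℝ}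

lemma softThreshold_apply (i : ι) :
    softThreshold τ u i = SignType.sign (u i) * max (|u i| - τ) 0 := rfl

lemma abs_softThreshold (hτ : 0 ≤ τ) (i : ι) :
    |softThreshold τ u i| = max (|u i| - τ) 0 := by
  rcases eq_or_ne (u i) 0 with h | h
  · simp [softThreshold_apply, h, hτ]
  · rw [softThreshold_apply, abs_mul, abs_of_nonneg (le_max_right (|u i| - τ) 0)]
    rcases h.lt_or_gt with h | h <;> simp [h]

lemma softThreshold_mul_self (hτ : 0 ≤ τ) (i : ι) :
    softThreshold τ u i * u i = |softThreshold τ u i| * (|softThreshold τ u i| + τ) := by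
  rw [abs_softThreshold u hτ, softThreshold_apply, mul_right_comm, sign_mul_self]
  rcases le_total (|u i|) τ with h | h
  · simp [max_eq_right (sub_nonpos.mpr h)]
  · rw [max_eq_left (sub_nonneg.mpr h)]
    ring

lemma abs_sub_softThreshold_le (hτ : 0 ≤ τ) (i : ι) : |u i - softThreshold τ u i| ≤ τ := by
  calc |u i - softThreshold τ u i|
      = |(SignType.sign (u i) : ℝ)| * |(|u i| - max (|u i| - τ) 0)| := by
        rw [← abs_mul, mul_sub, sign_mul_abs, softThreshold_apply]
    _ ≤ 1 * |(|u i| - max (|u i| - τ) 0)| := by gcongr; exact abs_sign_le_one _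
    _ ≤ τ := by
      rw [one_mul, abs_le]
      constructor <;> cases max_cases (|u i| - τ) 0 <;> linarith [abs_nonneg (u i)]

lemma lt_abs_of_softThreshold_ne_zero (hτ : 0 ≤ τ) {i : ι} (h : softThreshold τ u i ≠ 0) :
    τ < |u i| := by
  by_contra! hle
  apply h
  rw [← abs_eq_zero, abs_softThreshold u hτ, max_eq_right (sub_nonpos.mpr hle)]

lemma softThreshold_ne_zero (hτ : 0 ≤ τ) {i : ι} (h : τ < |u i|) :
    softThreshold τ u ≠ 0 := by
  intro h0
  have := abs_softThreshold u hτ i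
  rw [h0] at this
  simp only [PiLp.zero_apply, abs_zero] at this
  linarith [le_max_left (|u i| - τ) 0]

lemma continuous_softThreshold : Continuous fun τ => softThreshold τ u :=
  (PiLp.continuous_toLp 2 _).comp <| continuous_pi fun _ =>
    continuous_const.mul ((continuous_const.sub continuous_id).max continuous_const)

lemma sum_softThreshold_mul [Fintype ι] (hτ : 0 ≤ τ) :
    ∑ i, softThreshold τ u i * u i =
      ‖softThreshold τ u‖ ^ 2 + τ * ∑ i, |softThreshold τ u i| := by
  simp only [softThreshold_mul_self u hτ, EuclideanSpace.norm_sq_eq, Real.norm_eq_abs, mul_sum,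
    ← sum_add_distrib]
  exact sum_congr rfl fun i _ => by ring

lemma exists_softThreshold_balanced [Fintype ι] (r : ℝ) {τ₁ : ℝ} (hτ₁ : 0 ≤ τ₁)
    (h₁ : ∑ i, |softThreshold τ₁ u i| ≤ r * ‖softThreshold τ₁ u‖) :
    ∃ τ ∈ Set.Icc 0 τ₁, ∑ i, |softThreshold τ u i| ≤ r * ‖softThreshold τ u‖ ∧
      (τ = 0 ∨ ∑ i, |softThreshold τ u i| = r * ‖softThreshold τ u‖) := by
  set g : ℝ → ℝ := fun τ => ∑ i, |softThreshold τ u i| - r * ‖softThreshold τ u‖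
  have hs := continuous_softThreshold u
  have hg : Continuous g :=
    (continuous_finsetSum _ fun i _ => ((PiLp.continuous_apply 2 _ i).comp hs).abs).sub
      (continuous_const.mul hs.norm)
  by_cases h₀ : g 0 ≤ 0
  · exact ⟨0, ⟨le_rfl, hτ₁⟩, sub_nonpos.mp h₀, Or.inl rfl⟩
  · obtain ⟨τ, hτ, hgτ⟩ := intermediate_value_Icc' hτ₁ hg.continuousOn
      ⟨sub_nonpos.mpr h₁, (not_le.mp h₀).le⟩
    exact ⟨τ, hτ, sub_nonpos.mp hgτ.le, Or.inr (sub_eq_zero.mp hgτ)⟩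

lemma sum_inv_norm_smul_softThreshold_mul [Fintype ι] {r : ℝ} (hτ : 0 ≤ τ)
    (hs : softThreshold τ u ≠ 0)
    (h : τ = 0 ∨ ∑ i, |softThreshold τ u i| = r * ‖softThreshold τ u‖) :
    ∑ i, (‖softThreshold τ u‖⁻¹ • softThreshold τ u) i * u i =
      ‖softThreshold τ u‖ + r * τ := by
  have hn : ‖softThreshold τ u‖ ≠ 0 := norm_ne_zero_iff.mpr hs
  simp only [PiLp.smul_apply, smul_eq_mul, mul_assoc, ← mul_sum, sum_softThreshold_mul u hτ]
  rcases h with rfl | h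
  · simp only [zero_mul, mul_zero, add_zero]
    field_simp
  · rw [h]
    field_simp

end SoftThreshold

lemma exists_mem_Ico_forall_le_of_lt {ι : Type*} [Fintype ι] (f : ι → ℝ) {M : ℝ}
    (hM : 0 < M) :
    ∃ τ ∈ Set.Ico 0 M, ∀ i, f i < M → f i ≤ τ := by
  classical
  set T := insert 0 ((univ.filter fun i => f i < M).image f)
  refine ⟨T.max' (insert_nonempty _ _), ⟨le_max' _ _ (mem_insert_self _ _), ?_⟩,
    fun i hi => le_max' _ _ ?_⟩
  · rw [max'_lt_iff]
    simp [T, hM]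
  · simp only [T, mem_insert, mem_image, mem_filter, mem_univ, true_and]
    exact Or.inr ⟨i, hi, rfl⟩

section ElasticNet

variable {d k : ℕ}

lemma elNet_le_one_iff (hk : 1 ≤ k) (w : EuclideanSpace ℝ (Fin d)) :
    elNet d k w ≤ 1 ↔ ‖w‖ ≤ 1 ∧ ∑ i, |w i| ≤ √k := by
  rw [elNet, max_le_iff, div_le_one (Real.sqrt_pos.mpr (by exact_mod_cast hk))]

lemma sum_mul_le_of_elNet_le_one (hk : 1 ≤ k) {w : EuclideanSpace ℝ (Fin d)}
    (hw : elNet d k w ≤ 1) (u a : EuclideanSpace ℝ (Fin d)) :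
    ∑ i, w i * u i ≤ ‖a‖ + √k * ⨆ i, |u i - a i| := by
  obtain ⟨hw₂, hw₁⟩ := (elNet_le_one_iff hk w).mp hw
  have hinner : ∑ i, w i * a i ≤ ‖w‖ * ‖a‖ := by
    simpa [PiLp.inner_apply, mul_comm] using real_inner_le_norm w a
  calc ∑ i, w i * u i = ∑ i, w i * a i + ∑ i, w i * (u i - a i) := by
        rw [← sum_add_distrib]
        exact sum_congr rfl fun i _ => by ring
    _ ≤ 1 * ‖a‖ + √k * ⨆ i, |u i - a i| :=
        add_le_add (hinner.trans (mul_le_mul_of_nonneg_right hw₂ (norm_nonneg a)))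
          ((sum_mul_le_sum_abs_mul_iSup_abs _ _).trans
            (mul_le_mul_of_nonneg_right hw₁ (Real.iSup_nonneg fun i => abs_nonneg _)))
    _ = ‖a‖ + √k * ⨆ i, |u i - a i| := by rw [one_mul]

lemma exists_elNet_certificate_of_softThreshold (hk : 1 ≤ k) (u : EuclideanSpace ℝ (Fin d))
    {τ : ℝ} (hτ : 0 ≤ τ) (hs : softThreshold τ u ≠ 0)
    (hle : ∑ i, |softThreshold τ u i| ≤ √k * ‖softThreshold τ u‖)
    (h : τ = 0 ∨ ∑ i, |softThreshold τ u i| = √k * ‖softThreshold τ u‖) :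
    ∃ w a : EuclideanSpace ℝ (Fin d),
      elNet d k w ≤ 1 ∧ ‖a‖ + √k * ⨆ i, |u i - a i| ≤ ∑ i, w i * u i := by
  have hn : 0 < ‖softThreshold τ u‖ := norm_pos_iff.mpr hs
  refine ⟨‖softThreshold τ u‖⁻¹ • softThreshold τ u, softThreshold τ u,
    (elNet_le_one_iff hk _).mpr ⟨?_, ?_⟩, ?_⟩
  · rw [norm_smul, norm_inv, norm_norm, inv_mul_cancel₀ hn.ne']
  · simp only [PiLp.smul_apply, smul_eq_mul, abs_mul, abs_inv, abs_norm, ← mul_sum]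
    rwa [inv_mul_le_iff₀ hn, mul_comm]
  · rw [sum_inv_norm_smul_softThreshold_mul u hτ hs h]
    gcongr
    exact Real.iSup_le (abs_sub_softThreshold_le u hτ) hτ

lemma exists_elNet_certificate_of_le_card (hk : 1 ≤ k) (u : EuclideanSpace ℝ (Fin d))
    (hkF : k ≤ #{i | |u i| = ⨆ j, |u j|}) :
    ∃ w a : EuclideanSpace ℝ (Fin d),
      elNet d k w ≤ 1 ∧ ‖a‖ + √k * ⨆ i, |u i - a i| ≤ ∑ i, w i * u i := by
  set M := ⨆ j, |u j|
  set F : Finset (Fin d) := {i | |u i| = M}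
  set c := √k / #F
  have hF : (0 : ℝ) < #F := by exact_mod_cast (show 0 < #F by omega)
  have hcF : #F * c = √k := mul_div_cancel₀ _ hF.ne'
  set w : EuclideanSpace ℝ (Fin d) :=
    WithLp.toLp 2 fun i => if i ∈ F then c * SignType.sign (u i) else 0
  have hw : ∀ i, |w i| ≤ if i ∈ F then c else 0 := fun i => by
    show |if i ∈ F then c * SignType.sign (u i) else 0| ≤ _
    split_ifs
    · rw [abs_mul, abs_of_nonneg (by positivity : 0 ≤ c)]
      exact mul_le_of_le_one_right (by positivity) (abs_sign_le_one _)
    · simp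
  have hsum_ite : ∀ x : ℝ, ∑ i, (if i ∈ F then x else 0) = #F * x := fun x => by
    rw [sum_ite_mem, univ_inter, sum_const, nsmul_eq_mul]
  refine ⟨w, 0, (elNet_le_one_iff hk w).mpr ⟨?_, ?_⟩, le_of_eq ?_⟩
  · rw [EuclideanSpace.norm_eq, Real.sqrt_le_one]
    calc ∑ i, ‖w i‖ ^ 2 ≤ ∑ i, (if i ∈ F then c ^ 2 else 0) := sum_le_sum fun i _ => by
          rw [Real.norm_eq_abs]
          split_ifs with hi
          · simpa [hi] using pow_le_pow_left₀ (abs_nonneg _) (hw i) 2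
          · simpa [hi] using hw i
      _ = k / #F := by
          rw [hsum_ite, div_pow, Real.sq_sqrt (Nat.cast_nonneg k)]
          field_simp
      _ ≤ 1 := div_le_one_of_le₀ (by exact_mod_cast hkF) hF.le
  · calc ∑ i, |w i| ≤ ∑ i, (if i ∈ F then c else 0) := sum_le_sum fun i _ => hw i
      _ = √k := by rw [hsum_ite, hcF]
  · have hwu : ∀ i, w i * u i = if i ∈ F then c * M else 0 := fun i => by
      show (if i ∈ F then c * SignType.sign (u i) else 0) * u i = _
      split_ifs with hi
      · rw [mul_assoc, sign_mul_self, (mem_filter.mp hi).2]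
      · rw [zero_mul]
    simp only [sum_congr rfl fun i _ => hwu i, hsum_ite, norm_zero, zero_add, PiLp.zero_apply,
      sub_zero, ← mul_assoc, hcF, M]

lemma exists_elNet_certificate_of_card_lt (hk : 1 ≤ k) {u : EuclideanSpace ℝ (Fin d)}
    (hu : u ≠ 0) (hFk : #{i | |u i| = ⨆ j, |u j|} < k) :
    ∃ w a : EuclideanSpace ℝ (Fin d),
      elNet d k w ≤ 1 ∧ ‖a‖ + √k * ⨆ i, |u i - a i| ≤ ∑ i, w i * u i := by
  set M := ⨆ j, |u j|
  have hle : ∀ i, |u i| ≤ M := le_ciSup (Finite.bddAbove_range fun j => |u j|)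
  obtain ⟨i₁, hi₁⟩ : ∃ i, u i ≠ 0 := by
    by_contra! h
    exact hu (PiLp.ext h)
  have : Nonempty (Fin d) := ⟨i₁⟩
  obtain ⟨i₀, hi₀⟩ := exists_eq_ciSup_of_finite (f := fun j => |u j|)
  have hM : 0 < M := (abs_pos.mpr hi₁).trans_le (hle i₁)
  obtain ⟨τ₁, ⟨hτ₁, hτ₁M⟩, hgap⟩ := exists_mem_Ico_forall_le_of_lt (|u ·|) hM
  have hsupp : ∀ i, softThreshold τ₁ u i ≠ 0 → i ∈ ({i | |u i| = M} : Finset (Fin d)) := by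
    intro i hi
    have := lt_abs_of_softThreshold_ne_zero u hτ₁ hi
    simp only [mem_filter, mem_univ, true_and]
    exact (hle i).antisymm (not_lt.mp fun h => (hgap i h).not_gt this)
  have h₁ : ∑ i, |softThreshold τ₁ u i| ≤ √k * ‖softThreshold τ₁ u‖ :=
    (sum_abs_le_sqrt_card_mul_norm_s4 _ hsupp).trans (by gcongr)
  obtain ⟨τ, ⟨hτ, hττ₁⟩, hbal, hcs⟩ := exists_softThreshold_balanced u √k hτ₁ h₁
  have hs : softThreshold τ u ≠ 0 :=
    softThreshold_ne_zero u hτ (i := i₀) (by rw [hi₀]; linarith)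
  exact exists_elNet_certificate_of_softThreshold hk u hτ hs hbal hcs

lemma exists_elNet_certificate (hk : 1 ≤ k) (u : EuclideanSpace ℝ (Fin d)) :
    ∃ w a : EuclideanSpace ℝ (Fin d),
      elNet d k w ≤ 1 ∧ ‖a‖ + √k * ⨆ i, |u i - a i| ≤ ∑ i, w i * u i := by
  rcases eq_or_ne u 0 with rfl | hu
  · exact ⟨0, 0, by simp [elNet], by simp⟩
  rcases le_or_gt k #{i | |u i| = ⨆ j, |u j|} with h | h
  · exact exists_elNet_certificate_of_le_card hk u h
  · exact exists_elNet_certificate_of_card_lt hk hu h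

end ElasticNet

theorem statement4_general (d k : ℕ) (hk1 : 1 ≤ k) (u : EuclideanSpace ℝ (Fin d)) :
    sSup {x : ℝ | ∃ w : EuclideanSpace ℝ (Fin d), elNet d k w ≤ 1 ∧ x = ∑ i, w i * u i}
      = sInf {x : ℝ | ∃ a : EuclideanSpace ℝ (Fin d),
          x = ‖a‖ + Real.sqrt k * ⨆ i, |u i - a i|} := by
  obtain ⟨w, a, hw, hwa⟩ := exists_elNet_certificate hk1 u
  have hopt : ∑ i, w i * u i = ‖a‖ + √k * ⨆ i, |u i - a i| :=
    (sum_mul_le_of_elNet_le_one hk1 hw u a).antisymm hwa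
  refine (IsGreatest.csSup_eq (a := ∑ i, w i * u i) ?_).trans (IsLeast.csInf_eq ?_).symm
  · refine ⟨⟨w, hw, rfl⟩, ?_⟩
    rintro _ ⟨v, hv, rfl⟩
    exact (sum_mul_le_of_elNet_le_one hk1 hv u a).trans hwa
  · refine ⟨⟨a, hopt⟩, ?_⟩
    rintro _ ⟨b, rfl⟩
    exact sum_mul_le_of_elNet_le_one hk1 hw u b

/-- the dual norm of the elastic-net norm is
`‖u‖ₖᵉˡ* = inf{‖a‖₂ + √k·‖u − a‖_∞ : a ∈ ℝᵈ}`. -/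
theorem statement4 (d k : ℕ) (hk1 : 1 ≤ k) (hkd : k ≤ d) (u : EuclideanSpace ℝ (Fin d)) :
    sSup {x : ℝ | ∃ w : EuclideanSpace ℝ (Fin d), elNet d k w ≤ 1 ∧ x = ∑ i, w i * u i}
      = sInf {x : ℝ | ∃ a : EuclideanSpace ℝ (Fin d),
          x = ‖a‖ + Real.sqrt k * ⨆ i, |u i - a i|} :=
  statement4_general d k hk1 u
end

section
/- Let 1 ≤ k < d be integers and let u ∈ ℝ^d satisfy u_1 ≥ u_2 ≥ … ≥ u_d ≥ 0. Setting a = (u_1 − u_{k+1}, …, u_k − u_{k+1}, 0, …, 0) ∈ ℝ^d, one has ‖a‖₂ + √k · ‖u − a‖_∞ = ( ∑_{i=1}^k (u_i − u_{k+1})² )^{1/2} + √k · u_{k+1} ≤ √2 · ( ∑_{i=1}^k u_i² )^{1/2}. -/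
/-!
Subtracting `c = u_{k+1}` from the top `k` entries leaves `c` as the largest entry of
`u - a`, attained at index `k + 1`. For the inequality, `(x - c)² + c² ≤ x²` whenever
`0 ≤ c ≤ x`, so `‖a‖₂² + k c² ≤ ∑_{i ≤ k} u_i²`, and `p + q ≤ √2 · √(p² + q²)` finishes.
-/

open Finset

theorem Real.add_le_sqrt_two_mul_sqrt_sq_add_sq (p q : ℝ) :
    p + q ≤ √2 * √(p ^ 2 + q ^ 2) := by
  rw [← Real.sqrt_mul zero_le_two]
  apply Real.le_sqrt_of_sq_le
  nlinarith [sq_nonneg (p - q)]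

theorem Finset.sum_sub_sq_add_card_mul_sq_le {ι : Type*} (s : Finset ι) (f : ι → ℝ) {c : ℝ}
    (hc : 0 ≤ c) (hcf : ∀ i ∈ s, c ≤ f i) :
    ∑ i ∈ s, (f i - c) ^ 2 + #s * c ^ 2 ≤ ∑ i ∈ s, f i ^ 2 := by
  rw [← nsmul_eq_mul, ← sum_const, ← sum_add_distrib]
  refine sum_le_sum fun i hi => ?_
  nlinarith [hcf i hi]

theorem Finset.sqrt_sum_sub_sq_add_sqrt_card_mul_le {ι : Type*} (s : Finset ι) (f : ι → ℝ)
    {c : ℝ} (hc : 0 ≤ c) (hcf : ∀ i ∈ s, c ≤ f i) :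
    √(∑ i ∈ s, (f i - c) ^ 2) + √(#s : ℝ) * c ≤ √2 * √(∑ i ∈ s, f i ^ 2) := by
  set X := ∑ i ∈ s, (f i - c) ^ 2
  have hX : 0 ≤ X := sum_nonneg fun i _ => sq_nonneg _
  calc √X + √(#s : ℝ) * c
      ≤ √2 * √(√X ^ 2 + (√(#s : ℝ) * c) ^ 2) := Real.add_le_sqrt_two_mul_sqrt_sq_add_sq _ _
    _ = √2 * √(X + #s * c ^ 2) := by
        rw [mul_pow, Real.sq_sqrt hX, Real.sq_sqrt (Nat.cast_nonneg _)]
    _ ≤ √2 * √(∑ i ∈ s, f i ^ 2) := by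
        gcongr
        exact sum_sub_sq_add_card_mul_sq_le s f hc hcf

section Truncation

variable {d k : ℕ} (hkd : k < d) {u a : EuclideanSpace ℝ (Fin d)}
  (ha : ∀ i : Fin d, a i = if (i : ℕ) < k then u i - u ⟨k, hkd⟩ else 0)
include ha

theorem norm_eq_sqrt_sum_filter_lt_sub_sq :
    ‖a‖ = √(∑ i ∈ univ.filter fun i : Fin d => (i : ℕ) < k, (u i - u ⟨k, hkd⟩) ^ 2) := by
  rw [EuclideanSpace.norm_eq, sum_filter]
  congr 1
  refine sum_congr rfl fun i _ => ?_
  rw [ha i]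
  split_ifs <;> simp

theorem iSup_abs_sub_eq (hmono : ∀ i j : Fin d, i ≤ j → u j ≤ u i) (hnn : ∀ i, 0 ≤ u i) :
    ⨆ i, |u i - a i| = u ⟨k, hkd⟩ := by
  have : Nonempty (Fin d) := ⟨⟨k, hkd⟩⟩
  have hak : a ⟨k, hkd⟩ = 0 := by simp [ha]
  have hle : ∀ i, |u i - a i| ≤ u ⟨k, hkd⟩ := by
    intro i
    rw [ha i]
    split_ifs with hik
    · simp [abs_of_nonneg (hnn _)]
    · rw [sub_zero, abs_of_nonneg (hnn i)]
      exact hmono _ _ (Fin.le_def.mpr (not_lt.mp hik))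
  refine le_antisymm (ciSup_le hle) ?_
  calc u ⟨k, hkd⟩ = |u ⟨k, hkd⟩ - a ⟨k, hkd⟩| := by
        rw [hak, sub_zero, abs_of_nonneg (hnn _)]
    _ ≤ ⨆ i, |u i - a i| :=
        le_ciSup (f := fun i => |u i - a i|) (Finite.bddAbove_range _) _

end Truncation

theorem statement6_general (d k : ℕ) (hkd : k < d)
    (u a : EuclideanSpace ℝ (Fin d))
    (hmono : ∀ i j : Fin d, i ≤ j → u j ≤ u i) (hnn : ∀ i, 0 ≤ u i)
    (ha : ∀ i : Fin d, a i = if (i : ℕ) < k then u i - u ⟨k, hkd⟩ else 0) :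
    ‖a‖ + Real.sqrt k * (⨆ i, |u i - a i|)
      = Real.sqrt (∑ i ∈ Finset.univ.filter fun i : Fin d => (i : ℕ) < k,
            (u i - u ⟨k, hkd⟩) ^ 2)
        + Real.sqrt k * u ⟨k, hkd⟩ ∧
    Real.sqrt (∑ i ∈ Finset.univ.filter fun i : Fin d => (i : ℕ) < k,
            (u i - u ⟨k, hkd⟩) ^ 2)
        + Real.sqrt k * u ⟨k, hkd⟩
      ≤ Real.sqrt 2 *
        Real.sqrt (∑ i ∈ Finset.univ.filter fun i : Fin d => (i : ℕ) < k, u i ^ 2) := by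
  refine ⟨by
    rw [norm_eq_sqrt_sum_filter_lt_sub_sq hkd ha, iSup_abs_sub_eq hkd ha hmono hnn], ?_⟩
  have hcard : #(univ.filter fun i : Fin d => (i : ℕ) < k) = k := by
    rw [Fin.card_filter_val_lt, min_eq_right hkd.le]
  have hle : ∀ i ∈ univ.filter fun i : Fin d => (i : ℕ) < k, u ⟨k, hkd⟩ ≤ u i :=
    fun i hi => hmono _ _ (Fin.le_def.mpr (mem_filter.mp hi).2.le)
  simpa only [hcard] using sqrt_sum_sub_sq_add_sqrt_card_mul_le _ u (hnn _) hle

/-- for `u_1 ≥ … ≥ u_d ≥ 0` (here 0-indexed: `u 0 ≥ … ≥ u (d-1) ≥ 0`)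
and `a = (u_1 − u_{k+1}, …, u_k − u_{k+1}, 0, …, 0)`, one has
`‖a‖₂ + √k·‖u − a‖_∞ = (∑_{i=1}^k (u_i − u_{k+1})²)^½ + √k·u_{k+1}
 ≤ √2·(∑_{i=1}^k u_i²)^½`. -/
theorem statement6 (d k : ℕ) (hk1 : 1 ≤ k) (hkd : k < d)
    (u a : EuclideanSpace ℝ (Fin d))
    (hmono : ∀ i j : Fin d, i ≤ j → u j ≤ u i) (hnn : ∀ i, 0 ≤ u i)
    (ha : ∀ i : Fin d, a i = if (i : ℕ) < k then u i - u ⟨k, hkd⟩ else 0) :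
    ‖a‖ + Real.sqrt k * (⨆ i, |u i - a i|)
      = Real.sqrt (∑ i ∈ Finset.univ.filter fun i : Fin d => (i : ℕ) < k,
            (u i - u ⟨k, hkd⟩) ^ 2)
        + Real.sqrt k * u ⟨k, hkd⟩ ∧
    Real.sqrt (∑ i ∈ Finset.univ.filter fun i : Fin d => (i : ℕ) < k,
            (u i - u ⟨k, hkd⟩) ^ 2)
        + Real.sqrt k * u ⟨k, hkd⟩
      ≤ Real.sqrt 2 *
        Real.sqrt (∑ i ∈ Finset.univ.filter fun i : Fin d => (i : ℕ) < k, u i ^ 2) :=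
  statement6_general d k hkd u a hmono hnn ha
end

section
/- Let k ≥ 2 be an integer, d = 1 + k², and w = (k^{3/2}, 1, 1, …, 1) ∈ ℝ^d (one entry equal to k^{3/2} followed by k² entries equal to 1). Then ‖w‖_k^el = k^{3/2}·(1 + 1/√k) and ‖w‖_k^sp > √2 · k^{3/2}; in particular ‖w‖_k^sp / ‖w‖_k^el > √2 / (1 + k^{−1/2}), so the ratio between the k-support norm and the elastic-net norm can be made arbitrarily close to √2. -/
/-! Test `w` against `u = (√k, 1, …, 1)`. A vector of `S_k` meets at most `k` coordinates of
`u`, whose squares sum to at most `k + (k - 1)`, so by Cauchy–Schwarz `⟪u, v⟫ ≤ √(2k - 1)` on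
`S_k`, hence on its convex hull, and `⟪u, w⟫ ≤ √(2k - 1) ‖w‖ₖˢᵖ`. Since `⟪u, w⟫ = 2k²` and
`(2k²)² = 4k⁴ > 2k³(2k - 1)`, this gives `‖w‖ₖˢᵖ > √2 k^{3/2}`. The elastic-net value is a
direct computation in which the `ℓ₁` term dominates. -/

open Finset Pointwise RealInnerProductSpace

theorem le_mul_gauge_of_forall_le {E : Type*} [AddCommGroup E] [Module ℝ E] {s : Set E} {x : E}
    (f : E →ₗ[ℝ] ℝ) {M r : ℝ} (hM : 0 < M) (hf : ∀ v ∈ s, f v ≤ M) (hr : 0 < r)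
    (hx : x ∈ r • s) : f x ≤ M * gauge s x := by
  -- `hx` makes the infimum defining `gauge s x` nonempty; over `∅` it would be the junk value `0`.
  rw [← div_le_iff₀' hM, gauge_def]
  refine le_csInf ⟨r, hr, hx⟩ ?_
  rintro b ⟨hb, v, hv, rfl⟩
  rw [div_le_iff₀ hM, map_smul, smul_eq_mul]
  exact mul_le_mul_of_nonneg_left (hf v hv) (le_of_lt hb)

theorem sum_eq_add_mul_of_eq_of_ne {ι : Type*} [Fintype ι] [DecidableEq ι] (i₀ : ι) {f : ι → ℝ}
    {a b : ℝ} (h₀ : f i₀ = a) (h : ∀ i, i ≠ i₀ → f i = b) :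
    ∑ i, f i = a + (Fintype.card ι - 1 : ℕ) * b := by
  rw [← add_sum_erase _ _ (mem_univ i₀), h₀, sum_congr rfl fun i hi => h i (ne_of_mem_erase hi),
    sum_const, card_erase_of_mem (mem_univ i₀), card_univ, nsmul_eq_mul]

theorem single_mem_kSupBall {d k : ℕ} (hk : 1 ≤ k) (i : Fin d) {a : ℝ} (ha : |a| ≤ 1) :
    EuclideanSpace.single i a ∈ kSupBall d k := by
  refine subset_convexHull ℝ _ ⟨?_, by rwa [PiLp.norm_single, Real.norm_eq_abs]⟩
  refine (card_le_card fun j hj => ?_).trans ((card_singleton i).trans_le hk)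
  by_contra hji
  simp_all [PiLp.single_apply]

theorem sum_abs_pos {d : ℕ} {x : EuclideanSpace ℝ (Fin d)} (hx : x ≠ 0) : 0 < ∑ i, |x i| := by
  obtain ⟨i, hi⟩ : ∃ i, x i ≠ 0 := by
    by_contra! h
    exact hx (PiLp.ext h)
  exact sum_pos' (fun i _ => abs_nonneg _) ⟨i, mem_univ i, abs_pos.mpr hi⟩

theorem mem_sum_abs_smul_kSupBall {d k : ℕ} (hk : 1 ≤ k) {x : EuclideanSpace ℝ (Fin d)}
    (hx : x ≠ 0) : x ∈ (∑ i, |x i|) • kSupBall d k := by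
  have hpos := sum_abs_pos hx
  have hcm : univ.centerMass (fun i => |x i|)
      (fun i => EuclideanSpace.single i (SignType.sign (x i) : ℝ)) ∈ kSupBall d k :=
    (convex_convexHull ℝ _).centerMass_mem (fun i _ => abs_nonneg _) hpos fun i _ =>
      single_mem_kSupBall hk i (by rcases lt_trichotomy (x i) 0 with h | h | h <;> simp [h])
  rw [Set.mem_smul_set_iff_inv_smul_mem₀ hpos.ne']
  convert hcm using 1
  ext j
  simp [Finset.centerMass, Pi.single_apply]

theorem inner_le_sqrt_of_mem_kSupBall {d k : ℕ} {u v : EuclideanSpace ℝ (Fin d)} {B : ℝ}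
    (hu : ∀ T : Finset (Fin d), #T ≤ k → ∑ i ∈ T, u i ^ 2 ≤ B) (hv : v ∈ kSupBall d k) :
    ⟪u, v⟫ ≤ √B := by
  refine convexHull_min ?_ (convex_halfSpace_le (innerₛₗ ℝ u).isLinear √B) hv
  rintro v ⟨hcard, hnorm⟩
  set T := univ.filter fun i => v i ≠ 0
  have hvT : ∑ i ∈ T, v i ^ 2 ≤ 1 := calc
    ∑ i ∈ T, v i ^ 2 ≤ ∑ i, v i ^ 2 :=
      sum_le_sum_of_subset_of_nonneg (subset_univ T) fun i _ _ => sq_nonneg _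
    _ = ‖v‖ ^ 2 := (EuclideanSpace.real_norm_sq_eq v).symm
    _ ≤ 1 := pow_le_one₀ (norm_nonneg v) hnorm
  calc ⟪u, v⟫ = ∑ i ∈ T, u i * v i := by
        rw [PiLp.inner_apply]
        refine (sum_subset (subset_univ T) fun i _ hi => ?_).symm.trans (sum_congr rfl ?_)
        · simp_all [T]
        · intro i _
          simp [mul_comm]
    _ ≤ √(∑ i ∈ T, u i ^ 2) * √(∑ i ∈ T, v i ^ 2) := Real.sum_mul_le_sqrt_mul_sqrt T _ _
    _ ≤ √B * 1 := by gcongr; exacts [hu T hcard, Real.sqrt_le_one.mpr hvT]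
    _ = √B := mul_one _

theorem inner_le_sqrt_mul_kSupNorm {d k : ℕ} (hk : 1 ≤ k) {u : EuclideanSpace ℝ (Fin d)} {B : ℝ}
    (hB : 0 < B) (hu : ∀ T : Finset (Fin d), #T ≤ k → ∑ i ∈ T, u i ^ 2 ≤ B)
    (x : EuclideanSpace ℝ (Fin d)) : ⟪u, x⟫ ≤ √B * kSupNorm d k x := by
  rcases eq_or_ne x 0 with rfl | hx
  · simp [kSupNorm]
  · exact le_mul_gauge_of_forall_le (innerₛₗ ℝ u) (Real.sqrt_pos.2 hB)
      (fun v hv => inner_le_sqrt_of_mem_kSupBall hu hv) (sum_abs_pos hx)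
      (mem_sum_abs_smul_kSupBall hk hx)

theorem sum_sq_le_two_mul_sub_one {d k : ℕ} (hk : 1 ≤ k) (i₀ : Fin d) {u : Fin d → ℝ}
    (h₀ : u i₀ ^ 2 = k) (h₁ : ∀ i, i ≠ i₀ → u i ^ 2 = 1) {T : Finset (Fin d)} (hT : #T ≤ k) :
    ∑ i ∈ T, u i ^ 2 ≤ 2 * k - 1 := by
  have hu : ∀ i, u i ^ 2 = 1 + if i = i₀ then (k - 1 : ℝ) else 0 := by
    intro i
    split_ifs with h
    · rw [h, h₀]; ring
    · rw [h₁ i h, add_zero]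
  have hk' : (1 : ℝ) ≤ k := by exact_mod_cast hk
  have hT' : (#T : ℝ) ≤ k := by exact_mod_cast hT
  rw [sum_congr rfl fun i _ => hu i, sum_add_distrib, sum_ite_eq', sum_const, nsmul_one]
  split_ifs <;> linarith

section Spiked

variable {k : ℕ} (i₀ : Fin (1 + k ^ 2)) {w : EuclideanSpace ℝ (Fin (1 + k ^ 2))}

theorem sum_abs_spiked (hw₀ : w i₀ = k * √k) (hw₁ : ∀ i, i ≠ i₀ → w i = 1) :
    ∑ i, |w i| = k * √k + k ^ 2 := by
  rw [sum_eq_add_mul_of_eq_of_ne i₀ (a := k * √k) (b := 1)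
    (by rw [hw₀]; exact abs_of_nonneg (by positivity)) fun i hi => by simp [hw₁ i hi]]
  simp

theorem norm_sq_spiked (hw₀ : w i₀ = k * √k) (hw₁ : ∀ i, i ≠ i₀ → w i = 1) :
    ‖w‖ ^ 2 = k ^ 3 + k ^ 2 := by
  rw [EuclideanSpace.real_norm_sq_eq, sum_eq_add_mul_of_eq_of_ne i₀ (a := k ^ 3) (b := 1)
    (by rw [hw₀, mul_pow, Real.sq_sqrt k.cast_nonneg]; ring) fun i hi => by simp [hw₁ i hi]]
  simp

theorem elNet_spiked (hw₀ : w i₀ = k * √k) (hw₁ : ∀ i, i ≠ i₀ → w i = 1)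
    (hk : 0 < k) : elNet (1 + k ^ 2) k w = k * √k * (1 + 1 / √k) := by
  have hs : 0 < √(k : ℝ) := Real.sqrt_pos.2 (by exact_mod_cast hk)
  have hss : √(k : ℝ) ^ 2 = k := Real.sq_sqrt k.cast_nonneg
  have hl1 : (∑ i, |w i|) / √k = k * √k + k := by
    rw [sum_abs_spiked i₀ hw₀ hw₁, div_eq_iff hs.ne', add_mul, mul_assoc, ← sq, hss]
    ring
  rw [elNet, hl1, max_eq_right]
  · field_simp
  · refine le_of_pow_le_pow_left₀ two_ne_zero (by positivity) ?_
    rw [norm_sq_spiked i₀ hw₀ hw₁]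
    nlinarith

theorem sqrt_two_mul_lt_kSupNorm_spiked (hw₀ : w i₀ = k * √k) (hw₁ : ∀ i, i ≠ i₀ → w i = 1)
    (hk : 1 ≤ k) : √2 * (k * √k) < kSupNorm (1 + k ^ 2) k w := by
  have hk' : (1 : ℝ) ≤ k := by exact_mod_cast hk
  have hss : √(k : ℝ) ^ 2 = k := Real.sq_sqrt k.cast_nonneg
  have hM : 0 < √(2 * k - 1 : ℝ) := Real.sqrt_pos.2 (by linarith)
  set u : EuclideanSpace ℝ (Fin (1 + k ^ 2)) := WithLp.toLp 2 fun i => if i = i₀ then √k else 1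
  have hinner : ⟪u, w⟫ = 2 * k ^ 2 := by
    rw [PiLp.inner_apply, sum_eq_add_mul_of_eq_of_ne i₀ (a := k ^ 2) (b := 1)]
    · simp only [Fintype.card_fin, add_tsub_cancel_left, Nat.cast_pow, mul_one]
      ring
    · simp only [↓reduceIte, hw₀, RCLike.inner_apply, Real.ringHom_apply, u]
      rw [mul_assoc, ← sq, hss, sq]
    · intro i hi
      simp [u, hw₁ i hi, hi]
  have hdual : ⟪u, w⟫ ≤ √(2 * k - 1) * kSupNorm (1 + k ^ 2) k w :=
    inner_le_sqrt_mul_kSupNorm hk (by linarith)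
      (fun _ => sum_sq_le_two_mul_sub_one hk i₀ (by simp [u, hss]) fun i hi => by simp [u, hi]) w
  have hkey : √2 * (k * √k) * √(2 * k - 1) < 2 * k ^ 2 := by
    refine lt_of_pow_lt_pow_left₀ 2 (by positivity) ?_
    rw [mul_pow, mul_pow, mul_pow, Real.sq_sqrt zero_le_two, hss, Real.sq_sqrt (by linarith)]
    nlinarith
  exact lt_of_mul_lt_mul_right ((hkey.trans_le (hinner ▸ hdual)).trans_eq (mul_comm _ _)) hM.le

end Spiked

/-- for `k ≥ 2`, `d = 1 + k²` and
`w = (k^{3/2}, 1, …, 1)` (note `k^{3/2} = k·√k`), one has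
`‖w‖ₖᵉˡ = k^{3/2}(1 + 1/√k)`, `‖w‖ₖˢᵖ > √2·k^{3/2}`, and hence
`‖w‖ₖˢᵖ / ‖w‖ₖᵉˡ > √2 / (1 + k^{-1/2})`. -/
theorem statement8 (k : ℕ) (hk : 2 ≤ k) (w : EuclideanSpace ℝ (Fin (1 + k ^ 2)))
    (hw0 : w ⟨0, by positivity⟩ = (k : ℝ) * Real.sqrt k)
    (hw1 : ∀ i : Fin (1 + k ^ 2), i ≠ ⟨0, by positivity⟩ → w i = 1) :
    elNet (1 + k ^ 2) k w = (k : ℝ) * Real.sqrt k * (1 + 1 / Real.sqrt k) ∧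
    Real.sqrt 2 * ((k : ℝ) * Real.sqrt k) < kSupNorm (1 + k ^ 2) k w ∧
    Real.sqrt 2 / (1 + 1 / Real.sqrt k)
      < kSupNorm (1 + k ^ 2) k w / elNet (1 + k ^ 2) k w := by
  have hel := elNet_spiked _ hw0 hw1 (by omega)
  have hsup := sqrt_two_mul_lt_kSupNorm_spiked _ hw0 hw1 (by omega)
  refine ⟨hel, hsup, ?_⟩
  have hk0 : (0 : ℝ) < k * √k := by positivity
  rw [hel, ← mul_div_mul_left _ _ hk0.ne', mul_comm _ (√2)]
  exact div_lt_div_of_pos_right hsup (by positivity)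
end

section
/- For every integer 1 ≤ k ≤ d and every w ∈ ℝ^d, the k-support norm admits the variational characterization ‖w‖_k^sp = min{ ∑_{I ∈ G_k} ‖v_I‖₂ : each v_I ∈ ℝ^d has support contained in I, and ∑_{I ∈ G_k} v_I = w }, where G_k is the collection of all subsets of {1, …, d} of cardinality at most k. -/
open Finset Pointwise

section KSupportDecomposition

variable {d k : ℕ}

def kSupportSets (d k : ℕ) : Finset (Finset (Fin d)) :=
  univ.filter fun I => I.card ≤ k

@[simp]
lemma mem_kSupportSets {I : Finset (Fin d)} : I ∈ kSupportSets d k ↔ I.card ≤ k := by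
  simp [kSupportSets]

def subordinate (d k : ℕ) : Submodule ℝ (Finset (Fin d) → EuclideanSpace ℝ (Fin d)) where
  carrier := {v | ∀ I : Finset (Fin d), I.card ≤ k → ∀ i, v I i ≠ 0 → i ∈ I}
  add_mem' {v u} hv hu I hI i hi := by
    by_contra hiI
    have hvI : v I i = 0 := by_contra fun h => hiI (hv I hI i h)
    have huI : u I i = 0 := by_contra fun h => hiI (hu I hI i h)
    simp [hvI, huI] at hi
  zero_mem' _ _ i hi := by simp at hi
  smul_mem' a v hv I hI i hi := hv I hI i (by simp_all)

def decompSum (k : ℕ) (v : Finset (Fin d) → EuclideanSpace ℝ (Fin d)) :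
    EuclideanSpace ℝ (Fin d) :=
  ∑ I ∈ kSupportSets d k, v I

noncomputable def decompCost (k : ℕ) (v : Finset (Fin d) → EuclideanSpace ℝ (Fin d)) : ℝ :=
  ∑ I ∈ kSupportSets d k, ‖v I‖

lemma decompCost_nonneg (v : Finset (Fin d) → EuclideanSpace ℝ (Fin d)) :
    0 ≤ decompCost k v :=
  sum_nonneg fun _ _ => norm_nonneg _

lemma decompCost_smul {a : ℝ} (ha : 0 ≤ a) (v : Finset (Fin d) → EuclideanSpace ℝ (Fin d)) :
    decompCost k (a • v) = a * decompCost k v := by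
  simp [decompCost, norm_smul, abs_of_nonneg ha, mul_sum]

lemma decompCost_add_le (v u : Finset (Fin d) → EuclideanSpace ℝ (Fin d)) :
    decompCost k (v + u) ≤ decompCost k v + decompCost k u := by
  simp only [decompCost, ← sum_add_distrib]
  exact sum_le_sum fun I _ => norm_add_le _ _

lemma continuous_decompSum : Continuous (decompSum (d := d) k) :=
  continuous_finsetSum _ fun I _ => continuous_apply I

lemma continuous_decompCost : Continuous (decompCost (d := d) k) :=
  continuous_finsetSum _ fun I _ => (continuous_apply I).norm

lemma eq_zero_of_decompCost_eq_zero {v : Finset (Fin d) → EuclideanSpace ℝ (Fin d)}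
    (hv : decompCost k v = 0) {I : Finset (Fin d)} (hI : I.card ≤ k) : v I = 0 :=
  norm_eq_zero.mp <| (sum_eq_zero_iff_of_nonneg fun _ _ => norm_nonneg _).mp hv I
    (mem_kSupportSets.mpr hI)

def sparseUnitBall (d k : ℕ) : Set (EuclideanSpace ℝ (Fin d)) :=
  {w | (univ.filter fun i => w i ≠ 0).card ≤ k ∧ ‖w‖ ≤ 1}

lemma kSupBall_eq_convexHull : kSupBall d k = convexHull ℝ (sparseUnitBall d k) := rfl

lemma inv_norm_smul_mem_sparseUnitBall {I : Finset (Fin d)} (hI : I.card ≤ k)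
    {u : EuclideanSpace ℝ (Fin d)} (hu : ∀ i, u i ≠ 0 → i ∈ I) :
    ‖u‖⁻¹ • u ∈ sparseUnitBall d k := by
  refine ⟨(card_le_card fun i hi => hu i ?_).trans hI, ?_⟩
  · have hi' := (mem_filter.mp hi).2
    rw [PiLp.smul_apply, smul_eq_mul] at hi'
    exact right_ne_zero_of_mul hi'
  · rcases eq_or_ne u 0 with rfl | hu0
    · simp
    · exact (norm_smul_inv_norm hu0).le

lemma decompSum_mem_smul_kSupBall {v : Finset (Fin d) → EuclideanSpace ℝ (Fin d)}
    (hv : v ∈ subordinate d k) (hpos : 0 < decompCost k v) :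
    decompSum k v ∈ decompCost k v • kSupBall d k := by
  rw [kSupBall_eq_convexHull]
  refine ⟨_, centerMass_mem_convexHull (kSupportSets d k) (fun I _ => norm_nonneg (v I)) hpos
    fun I hI => inv_norm_smul_mem_sparseUnitBall (mem_kSupportSets.mp hI)
      (hv I (mem_kSupportSets.mp hI)), ?_⟩
  beta_reduce
  rw [centerMass, smul_smul, ← decompCost, mul_inv_cancel₀ hpos.ne', one_smul]
  refine sum_congr rfl fun I _ => ?_
  rcases eq_or_ne (v I) 0 with hI | hI
  · simp [hI]
  · exact smul_inv_smul₀ (norm_ne_zero_iff.mpr hI) _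

lemma kSupNorm_le_decompCost {v : Finset (Fin d) → EuclideanSpace ℝ (Fin d)}
    (hv : v ∈ subordinate d k) :
    kSupNorm d k (decompSum k v) ≤ decompCost k v := by
  rcases (decompCost_nonneg v).eq_or_lt with h0 | hpos
  · rw [decompSum, sum_eq_zero fun I hI =>
      eq_zero_of_decompCost_eq_zero h0.symm (mem_kSupportSets.mp hI), kSupNorm, gauge_zero, ← h0]
  · exact gauge_le_of_mem hpos.le (decompSum_mem_smul_kSupBall hv hpos)

def decompUnitBall (d k : ℕ) : Set (EuclideanSpace ℝ (Fin d)) :=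
  {w | ∃ v ∈ subordinate d k, decompSum k v = w ∧ decompCost k v ≤ 1}

lemma convex_decompUnitBall : Convex ℝ (decompUnitBall d k) := by
  rintro _ ⟨v, hv, rfl, hcv⟩ _ ⟨u, hu, rfl, hcu⟩ a b ha hb hab
  refine ⟨a • v + b • u, add_mem (Submodule.smul_mem _ a hv) (Submodule.smul_mem _ b hu), ?_,
    ?_⟩
  · simp [decompSum, sum_add_distrib, smul_sum]
  · calc decompCost k (a • v + b • u)
        ≤ a * decompCost k v + b * decompCost k u := by
          simpa only [decompCost_smul ha, decompCost_smul hb] using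
            decompCost_add_le (a • v) (b • u)
      _ ≤ a * 1 + b * 1 := by gcongr
      _ = 1 := by rw [mul_one, mul_one, hab]

lemma sparseUnitBall_subset_decompUnitBall : sparseUnitBall d k ⊆ decompUnitBall d k := by
  rintro z ⟨hcard, hnorm⟩
  set F := univ.filter fun i => z i ≠ 0
  refine ⟨Pi.single F z, fun I _ i hi => ?_, ?_, ?_⟩
  · rcases eq_or_ne I F with rfl | hIF
    · simpa [F] using hi
    · simp [hIF] at hi
  · simp [decompSum, hcard]
  · simpa [decompCost, Pi.single_apply, apply_ite, hcard]

lemma kSupBall_subset_decompUnitBall : kSupBall d k ⊆ decompUnitBall d k :=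
  kSupBall_eq_convexHull ▸ convexHull_min sparseUnitBall_subset_decompUnitBall convex_decompUnitBall

lemma exists_mem_subordinate_of_mem_smul_kSupBall {r : ℝ} (hr : 0 ≤ r)
    {w : EuclideanSpace ℝ (Fin d)} (hw : w ∈ r • kSupBall d k) :
    ∃ v ∈ subordinate d k, decompSum k v = w ∧ decompCost k v ≤ r := by
  obtain ⟨b, hb, rfl⟩ := hw
  obtain ⟨v, hv, rfl, hcost⟩ := kSupBall_subset_decompUnitBall hb
  refine ⟨r • v, Submodule.smul_mem _ r hv, by simp [decompSum, smul_sum], ?_⟩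
  rw [decompCost_smul hr]
  exact mul_le_of_le_one_right hr hcost

lemma exists_mem_subordinate_decompSum_eq (hk : 1 ≤ k) (w : EuclideanSpace ℝ (Fin d)) :
    ∃ v ∈ subordinate d k, decompSum k v = w := by
  refine ⟨fun J => WithLp.toLp 2 fun j => if J = {j} then w j else 0, fun J _ j hj => ?_, ?_⟩
  · simp only [ne_eq, ite_eq_right_iff, not_forall] at hj
    simp [hj.1]
  · ext j
    simp [decompSum, hk]

-- The `u J` with `J ∉ G_k` are unconstrained; zeroing them bounds a decomposition by its cost.
lemma exists_truncation_norm_le_decompCost {u : Finset (Fin d) → EuclideanSpace ℝ (Fin d)}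
    (hu : u ∈ subordinate d k) :
    ∃ u' ∈ subordinate d k, decompSum k u' = decompSum k u ∧
      decompCost k u' = decompCost k u ∧ ‖u'‖ ≤ decompCost k u := by
  classical
  have heq : ∀ I ∈ kSupportSets d k, (kSupportSets d k).piecewise u 0 I = u I :=
    fun I hI => piecewise_eq_of_mem _ _ _ hI
  refine ⟨(kSupportSets d k).piecewise u 0, fun I hI => by simpa [heq I (by simpa)] using hu I hI,
    sum_congr rfl heq, sum_congr rfl fun I hI => by rw [heq I hI],
    (pi_norm_le_iff_of_nonneg (decompCost_nonneg u)).mpr fun I => ?_⟩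
  by_cases hI : I ∈ kSupportSets d k
  · rw [heq I hI]
    exact single_le_sum (fun J _ => norm_nonneg (u J)) hI
  · simpa [hI] using decompCost_nonneg u

lemma exists_decompCost_minimizer (hk : 1 ≤ k) (w : EuclideanSpace ℝ (Fin d)) :
    ∃ v ∈ subordinate d k, decompSum k v = w ∧
      ∀ u ∈ subordinate d k, decompSum k u = w → decompCost k v ≤ decompCost k u := by
  obtain ⟨v₀, hv₀, hsum₀⟩ := exists_mem_subordinate_decompSum_eq hk w
  set c := decompCost k v₀
  set K := Metric.closedBall 0 c ∩
    {v | v ∈ subordinate d k ∧ decompSum k v = w ∧ decompCost k v ≤ c}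
  have hK : IsCompact K :=
    (isCompact_closedBall 0 c).inter_right <| (subordinate d k).closed_of_finiteDimensional.inter
      ((isClosed_eq continuous_decompSum continuous_const).inter
        (isClosed_le continuous_decompCost continuous_const))
  have exists_mem_K : ∀ u ∈ subordinate d k, decompSum k u = w → decompCost k u ≤ c →
      ∃ u' ∈ K, decompCost k u' = decompCost k u := by
    intro u hu hsum hcu
    obtain ⟨u', hu', hsum', hcost', hnorm'⟩ := exists_truncation_norm_le_decompCost hu
    exact ⟨u', ⟨mem_closedBall_zero_iff.mpr (hnorm'.trans hcu), hu', hsum'.trans hsum,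
      hcost'.trans_le hcu⟩, hcost'⟩
  obtain ⟨v₀', hv₀'K, -⟩ := exists_mem_K v₀ hv₀ hsum₀ le_rfl
  obtain ⟨v, ⟨-, hv, hsum, hvc⟩, hmin⟩ :=
    hK.exists_isMinOn ⟨v₀', hv₀'K⟩ continuous_decompCost.continuousOn
  refine ⟨v, hv, hsum, fun u hu husum => ?_⟩
  rcases le_or_gt (decompCost k u) c with hcu | hcu
  · obtain ⟨u', hu'K, hcost'⟩ := exists_mem_K u hu husum hcu
    exact hcost' ▸ hmin hu'K
  · exact hvc.trans hcu.le

end KSupportDecomposition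

theorem statement10_general (d k : ℕ) (hk1 : 1 ≤ k) (w : EuclideanSpace ℝ (Fin d)) :
    IsLeast {x : ℝ | ∃ v : Finset (Fin d) → EuclideanSpace ℝ (Fin d),
        (∀ I : Finset (Fin d), I.card ≤ k → ∀ i, v I i ≠ 0 → i ∈ I) ∧
        (∑ I ∈ Finset.univ.filter fun I : Finset (Fin d) => I.card ≤ k, v I) = w ∧
        x = ∑ I ∈ Finset.univ.filter fun I : Finset (Fin d) => I.card ≤ k, ‖v I‖}
      (kSupNorm d k w) := by
  obtain ⟨v, hv, hsum, hmin⟩ := exists_decompCost_minimizer hk1 w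
  have hle : decompCost k v ≤ kSupNorm d k w := by
    rcases (decompCost_nonneg v).eq_or_lt with h0 | hpos
    · exact h0 ▸ gauge_nonneg w
    refine le_csInf ⟨_, hpos, hsum ▸ decompSum_mem_smul_kSupBall hv hpos⟩
      fun r ⟨hr, hwr⟩ => ?_
    obtain ⟨u, hu, husum, hur⟩ := exists_mem_subordinate_of_mem_smul_kSupBall hr.le hwr
    exact (hmin u hu husum).trans hur
  refine ⟨⟨v, hv, hsum, le_antisymm (hsum ▸ kSupNorm_le_decompCost hv) hle⟩, ?_⟩
  rintro x ⟨u, hu, rfl, rfl⟩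
  exact kSupNorm_le_decompCost hu

/-- the k-support norm is the minimum of `∑_{I ∈ G_k} ‖v_I‖₂` over
decompositions `w = ∑_{I ∈ G_k} v_I` with `supp(v_I) ⊆ I`, where `G_k` is the
collection of all subsets of `{1,…,d}` of cardinality at most `k`. -/
theorem statement10 (d k : ℕ) (hk1 : 1 ≤ k) (hkd : k ≤ d) (w : EuclideanSpace ℝ (Fin d)) :
    IsLeast {x : ℝ | ∃ v : Finset (Fin d) → EuclideanSpace ℝ (Fin d),
        (∀ I : Finset (Fin d), I.card ≤ k → ∀ i, v I i ≠ 0 → i ∈ I) ∧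
        (∑ I ∈ Finset.univ.filter fun I : Finset (Fin d) => I.card ≤ k, v I) = w ∧
        x = ∑ I ∈ Finset.univ.filter fun I : Finset (Fin d) => I.card ≤ k, ‖v I‖}
      (kSupNorm d k w) :=
  statement10_general d k hk1 w
end

section
/- For every integer 1 ≤ k ≤ d, the convex hull of the set {w ∈ ℝ^d : ‖w‖₀ ≤ k, ‖w‖_∞ ≤ 1} equals {w ∈ ℝ^d : ‖w‖₁ ≤ k, ‖w‖_∞ ≤ 1}. -/
/-!
The set `P = {w : ‖w‖₁ ≤ k, ‖w‖_∞ ≤ 1}` is a compact convex polytope, so by Krein–Milman it is the closed convex hull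
of its extreme points. An extreme point has no coordinate of absolute value strictly between
`0` and `1`: two such coordinates can trade mass without changing `‖w‖₁`, and if there is only one,
the other coordinates contribute an integer `n` to `‖w‖₁ ≤ k`, so `n + 1 ≤ k` and the fractional
coordinate can be pushed to `0` or to `±1`. Hence the extreme points are finitely many vectors
with entries in `{-1, 0, 1}`, and for these `‖w‖₀ = ‖w‖₁ ≤ k`.
-/

open Finset Function

def sparseBox (ι : Type*) [Fintype ι] (k : ℕ) : Set (ι → ℝ) :=
  {w | #{i | w i ≠ 0} ≤ k ∧ ∀ i, |w i| ≤ 1}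

def l1Box (ι : Type*) [Fintype ι] (r : ℝ) : Set (ι → ℝ) :=
  {w | ∑ i, |w i| ≤ r ∧ ∀ i, |w i| ≤ 1}

variable {ι : Type*} [Fintype ι]

theorem convex_l1Box (r : ℝ) : Convex ℝ (l1Box ι r) := by
  intro x hx y hy a b ha hb hab
  have key (i : ι) : |a * x i + b * y i| ≤ a * |x i| + b * |y i| :=
    (abs_add_le _ _).trans_eq (by rw [abs_mul, abs_mul, abs_of_nonneg ha, abs_of_nonneg hb])
  simp only [l1Box, Set.mem_ofPred_eq, Pi.add_apply, Pi.smul_apply, smul_eq_mul]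
  refine ⟨?_, fun i => ?_⟩
  · calc ∑ i, |a * x i + b * y i| ≤ ∑ i, (a * |x i| + b * |y i|) := sum_le_sum fun i _ => key i
      _ = a * ∑ i, |x i| + b * ∑ i, |y i| := by rw [sum_add_distrib, mul_sum, mul_sum]
      _ ≤ a * r + b * r := by gcongr; exacts [hx.1, hy.1]
      _ = r := by rw [← add_mul, hab, one_mul]
  · calc |a * x i + b * y i| ≤ a * 1 + b * 1 := (key i).trans (by gcongr; exacts [hx.2 i, hy.2 i])
      _ = 1 := by rw [mul_one, mul_one, hab]

theorem isCompact_l1Box (r : ℝ) : IsCompact (l1Box ι r) := by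
  have hclosed : IsClosed (l1Box ι r) := by
    rw [l1Box, Set.ofPred_and, Set.ofPred_forall]
    exact (isClosed_le (continuous_finsetSum _ fun i _ => (continuous_apply i).abs)
      continuous_const).inter
        (isClosed_iInter fun i => isClosed_le (continuous_apply i).abs continuous_const)
  refine Metric.isCompact_of_isClosed_isBounded hclosed
    (Metric.isBounded_closedBall (x := 0) (r := 1) |>.subset fun w hw => ?_)
  simpa [mem_closedBall_zero_iff, pi_norm_le_iff_of_nonneg] using hw.2

theorem sum_abs_le_card_support {w : ι → ℝ} (hw : ∀ i, |w i| ≤ 1) :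
    ∑ i, |w i| ≤ #{i | w i ≠ 0} := by
  rw [natCast_card_filter]
  gcongr with i
  split_ifs with h
  exacts [hw i, by simp_all]

theorem sum_abs_eq_card_support {w : ι → ℝ} (hw : ∀ i, w i = 0 ∨ |w i| = 1) :
    ∑ i, |w i| = #{i | w i ≠ 0} := by
  rw [natCast_card_filter]
  refine sum_congr rfl fun i _ => ?_
  rcases hw i with h | h
  · simp [h]
  · simp [h, abs_ne_zero.mp (h ▸ one_ne_zero)]

theorem sparseBox_subset_l1Box (k : ℕ) : sparseBox ι k ⊆ l1Box ι k :=
  fun w hw => ⟨(sum_abs_le_card_support hw.2).trans (by exact_mod_cast hw.1), hw.2⟩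

theorem sum_abs_update [DecidableEq ι] (w : ι → ℝ) (i : ι) (a : ℝ) :
    ∑ x, |update w i a x| = ∑ x, |w x| - |w i| + |a| := by
  rw [← add_sum_erase _ _ (mem_univ i), ← add_sum_erase _ _ (mem_univ i), update_self]
  have : ∑ x ∈ univ.erase i, |update w i a x| = ∑ x ∈ univ.erase i, |w x| :=
    sum_congr rfl fun x hx => by rw [update_of_ne (ne_of_mem_erase hx)]
  rw [this]
  ring

theorem one_add_mul_mul_abs_le_one {x y t : ℝ} (hy : |y| ≤ 1) (ht : |t| ≤ 1 - |x|) :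
    0 ≤ 1 + t * y ∧ (1 + t * y) * |x| ≤ 1 := by
  have hty : |t * y| ≤ |t| := by
    rw [abs_mul]; exact mul_le_of_le_one_right (abs_nonneg t) hy
  have hx := abs_nonneg x
  constructor
  · linarith [neg_abs_le (t * y)]
  · calc (1 + t * y) * |x| ≤ (1 + |t|) * |x| := by gcongr; exact (le_abs_self _).trans hty
      _ ≤ (2 - |x|) * |x| := by gcongr; linarith
      _ ≤ 1 := by nlinarith [sq_nonneg (1 - |x|)]

theorem notMem_extremePoints_l1Box_of_two_fractional {r : ℝ} {w : ι → ℝ} {i j : ι}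
    (hw : w ∈ l1Box ι r) (hij : i ≠ j) (hi : |w i| ∈ Set.Ioo 0 1) (hj : |w j| ∈ Set.Ioo 0 1) :
    w ∉ (l1Box ι r).extremePoints ℝ := by
  classical
  obtain ⟨τ, hτ, hτi, hτj⟩ : ∃ τ : ℝ, 0 < τ ∧ τ ≤ 1 - |w i| ∧ τ ≤ 1 - |w j| :=
    ⟨_, lt_min (by linarith [hi.2]) (by linarith [hj.2]), min_le_left _ _, min_le_right _ _⟩
  -- `shift t` moves mass `t * |w i| * |w j|` from coordinate `j` to coordinate `i`
  let shift (t : ℝ) : ι → ℝ :=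
    update (update w i ((1 + t * |w j|) * w i)) j ((1 + -t * |w i|) * w j)
  have shift_mem (t : ℝ) (ht : |t| ≤ τ) : shift t ∈ l1Box ι r := by
    obtain ⟨ha₀, ha₁⟩ := one_add_mul_mul_abs_le_one (x := w i) ((abs_abs _).trans_le hj.2.le)
      (ht.trans hτi)
    obtain ⟨hb₀, hb₁⟩ := one_add_mul_mul_abs_le_one (x := w j) ((abs_abs _).trans_le hi.2.le)
      ((abs_neg t).trans_le (ht.trans hτj))
    rw [← abs_of_nonneg ha₀, ← abs_mul] at ha₁
    rw [← abs_of_nonneg hb₀, ← abs_mul] at hb₁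
    refine ⟨?_, fun x => ?_⟩
    · rw [sum_abs_update, sum_abs_update, update_of_ne hij.symm, abs_mul, abs_mul,
        abs_of_nonneg ha₀, abs_of_nonneg hb₀]
      linarith [hw.1]
    · simp only [shift, update_apply]
      split_ifs
      exacts [hb₁, ha₁, hw.2 x]
  intro hext
  have hhalf : w ∈ openSegment ℝ (shift τ) (shift (-τ)) := by
    refine ⟨1 / 2, 1 / 2, by norm_num, by norm_num, by norm_num, funext fun x => ?_⟩
    simp only [shift, Pi.add_apply, Pi.smul_apply, smul_eq_mul, update_apply]
    split_ifs <;> subst_vars <;> ring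
  have hfix := congrFun (hext.2 (shift_mem τ (abs_of_pos hτ).le)
    (shift_mem (-τ) (by rw [abs_neg, abs_of_pos hτ])) hhalf) i
  simp only [shift, update_of_ne hij, update_self] at hfix
  exact mul_ne_zero (mul_ne_zero hτ.ne' hj.1.ne') (abs_pos.1 hi.1) (by linarith)

theorem notMem_extremePoints_l1Box_of_one_fractional {k : ℕ} {w : ι → ℝ} {i : ι}
    (hw : w ∈ l1Box ι k) (hi : |w i| ∈ Set.Ioo 0 1) (hrest : ∀ j ≠ i, w j = 0 ∨ |w j| = 1) :
    w ∉ (l1Box ι k).extremePoints ℝ := by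
  classical
  set y := update w i (w i / |w i|)
  set z := update w i 0
  have hyi : |(w i / |w i|)| = 1 := by rw [abs_div, abs_abs, div_self hi.1.ne']
  obtain ⟨n, hzn⟩ : ∃ n : ℕ, ∑ x, |z x| = n := by
    refine ⟨_, sum_abs_eq_card_support fun x => ?_⟩
    rcases eq_or_ne x i with rfl | hx
    · simp [z]
    · simpa [z, update_of_ne hx] using hrest x hx
  have hz_sum : ∑ x, |z x| = ∑ x, |w x| - |w i| := by simp [z, sum_abs_update]
  have hy_sum : ∑ x, |y x| = n + 1 := by rw [sum_abs_update, hyi]; linarith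
  have hnk : n + 1 ≤ k := by
    have : (n : ℝ) < k := by linarith [hw.1, hi.1]
    exact_mod_cast this
  have hy : y ∈ l1Box ι k := by
    refine ⟨by rw [hy_sum]; exact_mod_cast hnk, fun x => ?_⟩
    rcases eq_or_ne x i with rfl | hx
    · simp [y, hyi]
    · simpa [y, update_of_ne hx] using hw.2 x
  have hz : z ∈ l1Box ι k := by
    refine ⟨by linarith [hw.1, hi.1], fun x => ?_⟩
    rcases eq_or_ne x i with rfl | hx
    · simp [z]
    · simpa [z, update_of_ne hx] using hw.2 x
  intro hext
  have hseg : w ∈ openSegment ℝ y z := by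
    refine ⟨|w i|, 1 - |w i|, hi.1, by linarith [hi.2], by ring, funext fun x => ?_⟩
    rcases eq_or_ne x i with rfl | hx
    · simp [y, z, mul_div_cancel₀ _ hi.1.ne']
    · simp only [y, z, Pi.add_apply, Pi.smul_apply, smul_eq_mul, update_of_ne hx]
      ring
  have hfix := congrFun (hext.2 hy hz hseg) i
  simp only [y, update_self] at hfix
  linarith [hi.2, hfix ▸ hyi]

theorem eq_zero_or_abs_eq_one_of_mem_extremePoints_l1Box {k : ℕ} {w : ι → ℝ}
    (hw : w ∈ (l1Box ι k).extremePoints ℝ) (i : ι) : w i = 0 ∨ |w i| = 1 := by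
  have fractional {j : ι} (hj : ¬(w j = 0 ∨ |w j| = 1)) : |w j| ∈ Set.Ioo 0 1 :=
    ⟨abs_pos.2 (not_or.1 hj).1, (hw.1.2 j).lt_of_ne (not_or.1 hj).2⟩
  by_contra hi
  by_cases hrest : ∀ j ≠ i, w j = 0 ∨ |w j| = 1
  · exact notMem_extremePoints_l1Box_of_one_fractional hw.1 (fractional hi) hrest hw
  · obtain ⟨j, hji, hj⟩ := not_forall₂.1 hrest
    exact notMem_extremePoints_l1Box_of_two_fractional hw.1 hji (fractional hj) (fractional hi) hw

theorem extremePoints_l1Box_subset_sparseBox (k : ℕ) :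
    (l1Box ι k).extremePoints ℝ ⊆ sparseBox ι k := fun w hw =>
  ⟨by exact_mod_cast (sum_abs_eq_card_support
      (eq_zero_or_abs_eq_one_of_mem_extremePoints_l1Box hw)).symm.trans_le hw.1.1, hw.1.2⟩

theorem finite_extremePoints_l1Box (k : ℕ) : ((l1Box ι k).extremePoints ℝ).Finite := by
  refine (Set.Finite.pi fun _ => Set.toFinite {-1, 0, 1}).subset fun w hw i _ => ?_
  rcases eq_zero_or_abs_eq_one_of_mem_extremePoints_l1Box hw i with h | h
  · simp [h]
  · rcases (abs_eq zero_le_one).1 h with h | h <;> simp [h]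

theorem convexHull_sparseBox (k : ℕ) : convexHull ℝ (sparseBox ι k) = l1Box ι k := by
  refine (convexHull_min (sparseBox_subset_l1Box k) (convex_l1Box k)).antisymm ?_
  calc l1Box ι k = closure (convexHull ℝ ((l1Box ι k).extremePoints ℝ)) :=
        (closure_convexHull_extremePoints (isCompact_l1Box _) (convex_l1Box _)).symm
    _ = convexHull ℝ ((l1Box ι k).extremePoints ℝ) :=
        ((finite_extremePoints_l1Box k).isClosed_convexHull ℝ).closure_eq
    _ ⊆ convexHull ℝ (sparseBox ι k) := convexHull_mono (extremePoints_l1Box_subset_sparseBox k)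

theorem statement11_general (d k : ℕ) :
    convexHull ℝ {w : Fin d → ℝ |
        (Finset.univ.filter fun i => w i ≠ 0).card ≤ k ∧ ∀ i, |w i| ≤ 1}
      = {w : Fin d → ℝ | (∑ i, |w i|) ≤ k ∧ ∀ i, |w i| ≤ 1} :=
  convexHull_sparseBox k

/-- the convex hull of `{w : ‖w‖₀ ≤ k, ‖w‖_∞ ≤ 1}` equals
`{w : ‖w‖₁ ≤ k, ‖w‖_∞ ≤ 1}`. -/
theorem statement11 (d k : ℕ) (hk1 : 1 ≤ k) (hkd : k ≤ d) :
    convexHull ℝ {w : Fin d → ℝ |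
        (Finset.univ.filter fun i => w i ≠ 0).card ≤ k ∧ ∀ i, |w i| ≤ 1}
      = {w : Fin d → ℝ | (∑ i, |w i|) ≤ k ∧ ∀ i, |w i| ≤ 1} :=
  statement11_general d k
end

section
/- Let 1 ≤ k ≤ d be integers, L > 0, and let v ∈ ℝ^d satisfy v_1 ≥ v_2 ≥ … ≥ v_d ≥ 0. Suppose r ∈ {0, …, k−1} and ℓ ∈ {k, …, d} satisfy, with T := ∑_{i=k−r}^ℓ v_i, D := ℓ − k + (L+1)r + L + 1, and conventions v_0 = +∞, v_{d+1} = −∞: (1/(L+1))·v_{k−r−1} > T/D ≥ (1/(L+1))·v_{k−r} and v_ℓ > T/D ≥ v_{ℓ+1}. Then the vector q ∈ ℝ^d defined by q_i = (L/(L+1))·v_i for i = 1, …, k−r−1, q_i = v_i − T/D for i = k−r, …, ℓ, and q_i = 0 for i = ℓ+1, …, d, is the unique minimizer over u ∈ ℝ^d of (1/2)‖u − v‖₂² + (1/(2L))(‖u‖_k^sp)²; that is, q is the proximity operator of (1/(2L))(‖·‖_k^sp)² evaluated at v. -/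
/-- 1-indexed access to the entries of a vector: `ent v i = v_i` for `1 ≤ i ≤ d`. -/
noncomputable def ent {d : ℕ} (v : EuclideanSpace ℝ (Fin d)) (i : ℕ) : ℝ :=
  if h : 1 ≤ i ∧ i ≤ d then v ⟨i - 1, by omega⟩ else 0


open Finset Pointwise

/-!
Put `z = v - q`. The hypotheses say that `z` is `v` with its head scaled by `1 / (L + 1)`, its
middle block flattened to the level `c = T / D` and its tail left unchanged; in particular `z` is
nonincreasing and nonnegative, so Cauchy–Schwarz on `k`-sparse vectors gives
`⟪z, u⟫ ≤ ‖u‖ₖˢᵖ · N` for all `u`, with `N² = ∑_{i ≤ k} zᵢ²`. Conversely, `q` is a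
`(k - r - 1)`-sparse head plus a middle block with entries in `[0, L c]` summing to `(r + 1) L c`.
The normalised middle block lies in a hypersimplex, whose vertices are `0/1` vectors with `r + 1`
ones (Krein–Milman), so `q` is a convex combination of `k`-sparse vectors of norm `L N`, whence
`‖q‖ₖˢᵖ ≤ L N`; a direct computation gives `⟪z, q⟫ = L N²`. These three facts certify that `q`
minimises the strongly convex objective: expanding `‖u - v‖²` around `q` gives the strict
inequality.
-/

theorem prox_objective_lt_of_dual_certificate {E : Type*} [NormedAddCommGroup E]
    [InnerProductSpace ℝ E] {G : E → ℝ} {v q : E} {L N : ℝ} (hL : 0 < L)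
    (hdual : ∀ u, inner ℝ (v - q) u ≤ G u * N) (hGq₀ : 0 ≤ G q) (hGq : G q ≤ L * N)
    (hinner : inner ℝ (v - q) q = L * N ^ 2) {u : E} (hu : u ≠ q) :
    1 / 2 * ‖q - v‖ ^ 2 + 1 / (2 * L) * G q ^ 2
      < 1 / 2 * ‖u - v‖ ^ 2 + 1 / (2 * L) * G u ^ 2 := by
  have hexpand : ‖u - v‖ ^ 2 = ‖u - q‖ ^ 2 - 2 * (inner ℝ (v - q) u - L * N ^ 2) + ‖q - v‖ ^ 2 := by
    rw [show u - v = (u - q) - (v - q) by abel, norm_sub_sq_real, real_inner_comm,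
      inner_sub_right, hinner, norm_sub_rev v q]
  have hpos : 0 < ‖u - q‖ ^ 2 := by positivity [sub_ne_zero.2 hu]
  have hGq_sq : G q ^ 2 ≤ (L * N) ^ 2 := pow_le_pow_left₀ hGq₀ hGq 2
  rw [← mul_lt_mul_iff_of_pos_left (by positivity : (0 : ℝ) < 2 * L)]
  field_simp
  nlinarith [hdual u, sq_nonneg (G u - L * N), mul_pos hL hpos]

theorem apply_le_gauge_mul {E : Type*} [AddCommGroup E] [Module ℝ E] {s : Set E}
    (hs : Absorbent ℝ s) (φ : E →ₗ[ℝ] ℝ) {N : ℝ} (hN : 0 ≤ N) (hφ : ∀ w ∈ s, φ w ≤ N) (u : E) :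
    φ u ≤ gauge s u * N := by
  rcases hN.eq_or_lt with rfl | hN
  · obtain ⟨r, hr, w, hw, rfl⟩ := hs.gauge_set_nonempty (x := u)
    simpa using mul_nonpos_of_nonneg_of_nonpos hr.le (hφ w hw)
  rw [← div_le_iff₀ hN]
  refine le_csInf hs.gauge_set_nonempty ?_
  rintro r ⟨hr, w, hw, rfl⟩
  rw [map_smul, smul_eq_mul, div_le_iff₀ hN]
  exact mul_le_mul_of_nonneg_left (hφ w hw) hr.le

theorem sum_le_sum_filter_lt_of_antitone {n k : ℕ} (hk : 0 < k) (hkn : k ≤ n) {f : Fin n → ℝ}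
    (hf : Antitone f) (hf₀ : ∀ i, 0 ≤ f i) {A : Finset (Fin n)} (hA : #A ≤ k) :
    ∑ i ∈ A, f i ≤ ∑ i ∈ univ.filter (fun i : Fin n => (i : ℕ) < k), f i := by
  set K := univ.filter (fun i : Fin n => (i : ℕ) < k)
  have hK : #K = k := by simp [K, Fin.card_filter_val_lt, hkn]
  set pivot : Fin n := ⟨k - 1, by omega⟩
  have hout : ∀ i ∈ A \ K, f i ≤ f pivot := fun i hi ↦
    hf (by simp [K, pivot, Fin.le_def] at hi ⊢; omega)
  have hin : ∀ i ∈ K \ A, f pivot ≤ f i := fun i hi ↦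
    hf (by simp [K, pivot, Fin.le_def] at hi ⊢; omega)
  have hcard : #(A \ K) ≤ #(K \ A) := by
    have := card_sdiff_add_card_inter A K
    have := card_sdiff_add_card_inter K A
    rw [inter_comm] at this
    omega
  have hsdiff : ∑ i ∈ A \ K, f i ≤ ∑ i ∈ K \ A, f i :=
    calc ∑ i ∈ A \ K, f i ≤ #(A \ K) • f pivot := sum_le_card_nsmul _ _ _ hout
      _ ≤ #(K \ A) • f pivot := nsmul_le_nsmul_left (hf₀ pivot) hcard
      _ ≤ ∑ i ∈ K \ A, f i := card_nsmul_le_sum _ _ _ hin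
  rw [← sum_inter_add_sum_sdiff A K, ← sum_inter_add_sum_sdiff K A, inter_comm]
  linarith

theorem card_filter_le_and_lt {d a ℓ : ℕ} (hℓ : ℓ ≤ d) :
    #(univ.filter fun i : Fin d => a ≤ (i : ℕ) ∧ (i : ℕ) < ℓ) = ℓ - a := by
  rw [← Nat.card_Ico, ← card_map Fin.valEmbedding]
  congr 1
  ext m
  simp only [mem_map, mem_filter, mem_univ, true_and, Fin.valEmbedding_apply, mem_Ico]
  exact ⟨fun ⟨i, hi, him⟩ ↦ him ▸ hi, fun hm ↦ ⟨⟨m, by omega⟩, hm, rfl⟩⟩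

theorem sum_filter_lt_eq_add_of_eq_const {d a k : ℕ} (hak : a ≤ k) (hkd : k ≤ d)
    {f : Fin d → ℝ} {c : ℝ} (hf : ∀ i : Fin d, a ≤ (i : ℕ) → (i : ℕ) < k → f i = c) :
    ∑ i ∈ univ.filter (fun i : Fin d => (i : ℕ) < k), f i
      = ∑ i ∈ univ.filter (fun i : Fin d => (i : ℕ) < a), f i + (k - a : ℕ) * c := by
  have hsplit (i : Fin d) : (if (i : ℕ) < k then f i else 0)
      = (if (i : ℕ) < a then f i else 0) + if a ≤ (i : ℕ) ∧ (i : ℕ) < k then c else 0 := by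
    by_cases hia : (i : ℕ) < a
    · simp [hia, show (i : ℕ) < k by omega, show ¬ a ≤ (i : ℕ) by omega]
    by_cases hik : (i : ℕ) < k
    · simp [hia, hik, hf i (by omega) hik]
    · simp [hia, hik]
  rw [sum_filter, sum_filter, sum_congr rfl fun i _ ↦ hsplit i, sum_add_distrib]
  congr 1
  rw [← sum_filter, sum_const, card_filter_le_and_lt hkd, nsmul_eq_mul]

section Hypersimplex

variable {ι : Type*} [Fintype ι]

def hypersimplex (A : Finset ι) (s : ℕ) : Set (ι → ℝ) :=
  {x | (∀ i, x i ∈ Set.Icc 0 1) ∧ (∀ i ∉ A, x i = 0) ∧ ∑ i, x i = s}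

theorem convex_hypersimplex (A : Finset ι) (s : ℕ) : Convex ℝ (hypersimplex A s) := by
  rintro x ⟨hx, hxA, hxs⟩ y ⟨hy, hyA, hys⟩ a b ha hb hab
  refine ⟨fun i ↦ ⟨?_, ?_⟩, fun i hi ↦ ?_, ?_⟩
  · have := (hx i).1; have := (hy i).1; simp only [Pi.add_apply, Pi.smul_apply, smul_eq_mul]
    positivity
  · have := (hx i).2; have := (hy i).2; simp only [Pi.add_apply, Pi.smul_apply, smul_eq_mul]
    nlinarith
  · simp [hxA i hi, hyA i hi]
  · simp only [Pi.add_apply, Pi.smul_apply, smul_eq_mul, sum_add_distrib, ← mul_sum, hxs, hys]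
    rw [← add_mul, hab, one_mul]

theorem isCompact_hypersimplex (A : Finset ι) (s : ℕ) : IsCompact (hypersimplex A s) := by
  refine (isCompact_univ_pi fun _ ↦ isCompact_Icc).of_isClosed_subset ?_ fun x hx i _ ↦ hx.1 i
  have hcoord (i : ι) : Continuous fun x : ι → ℝ ↦ x i := continuous_apply i
  simp only [hypersimplex, Set.ofPred_and, Set.ofPred_forall]
  exact (isClosed_iInter fun i ↦ isClosed_Icc.preimage (hcoord i)).inter
    ((isClosed_iInter fun i ↦ isClosed_iInter fun _ ↦ isClosed_eq (hcoord i) continuous_const).inter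
      (isClosed_eq (continuous_finsetSum _ fun i _ ↦ hcoord i) continuous_const))

theorem exists_ne_of_sum_eq_natCast {x : ι → ℝ} {s : ℕ} (hs : ∑ i, x i = s) {i : ι}
    (hi : x i ∈ Set.Ioo 0 1) : ∃ j ≠ i, x j ≠ 0 ∧ x j ≠ 1 := by
  classical
  by_contra! h
  have hrest : ∑ j ∈ univ.erase i, x j = #((univ.erase i).filter fun j ↦ x j = 1) := by
    rw [natCast_card_filter]
    refine sum_congr rfl fun j hj ↦ ?_
    rcases eq_or_ne (x j) 0 with h0 | h0
    · simp [h0]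
    · simp [h j (ne_of_mem_erase hj) h0]
  rw [← add_sum_erase _ _ (mem_univ i), hrest] at hs
  set m := #((univ.erase i).filter fun j ↦ x j = 1)
  have h0 : (0 : ℝ) < (s : ℤ) - (m : ℤ) := by push_cast; linarith [hi.1]
  have h1 : ((s : ℤ) - (m : ℤ) : ℝ) < 1 := by push_cast; linarith [hi.2]
  norm_cast at h0 h1
  omega

theorem add_smul_single_sub_single_mem_hypersimplex [DecidableEq ι] {A : Finset ι} {s : ℕ}
    {x : ι → ℝ} (hx : x ∈ hypersimplex A s) {i j : ι} (hij : i ≠ j) (hi : i ∈ A) (hj : j ∈ A)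
    {t : ℝ} (hti : x i + t ∈ Set.Icc 0 1) (htj : x j - t ∈ Set.Icc 0 1) :
    x + t • (Pi.single i 1 - Pi.single j 1) ∈ hypersimplex A s := by
  obtain ⟨hx01, hxA, hxs⟩ := hx
  refine ⟨fun l ↦ ?_, fun l hl ↦ ?_, ?_⟩
  · rcases eq_or_ne l i with rfl | hli
    · simpa [hij] using hti
    rcases eq_or_ne l j with rfl | hlj
    · simpa [hli, sub_eq_add_neg] using htj
    · simpa [hli, hlj] using hx01 l
  · have hli : l ≠ i := fun h ↦ hl (h ▸ hi)
    have hlj : l ≠ j := fun h ↦ hl (h ▸ hj)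
    simp [hli, hlj, hxA l hl]
  · simp [sum_add_distrib, ← mul_sum, hxs]

theorem eq_zero_or_eq_one_of_mem_extremePoints_hypersimplex {A : Finset ι} {s : ℕ} {x : ι → ℝ}
    (hx : x ∈ (hypersimplex A s).extremePoints ℝ) (i : ι) : x i = 0 ∨ x i = 1 := by
  classical
  obtain ⟨⟨hx01, hxA, hxs⟩, hext⟩ := mem_extremePoints.1 hx
  have hmemA : ∀ i, x i ≠ 0 → i ∈ A := fun i hi ↦ by_contra fun hiA ↦ hi (hxA i hiA)
  by_contra! h
  have hi : x i ∈ Set.Ioo 0 1 := ⟨(hx01 i).1.lt_of_ne' h.1, (hx01 i).2.lt_of_ne h.2⟩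
  obtain ⟨j, hji, hj0, hj1⟩ := exists_ne_of_sum_eq_natCast hxs hi
  have hj : x j ∈ Set.Ioo 0 1 := ⟨(hx01 j).1.lt_of_ne' hj0, (hx01 j).2.lt_of_ne hj1⟩
  -- `x` is the midpoint of two points obtained by moving mass `±ε` between `i` and `j`
  set ε := min (min (x i) (1 - x i)) (min (x j) (1 - x j))
  have hε : 0 < ε := lt_min (lt_min hi.1 (sub_pos.2 hi.2)) (lt_min hj.1 (sub_pos.2 hj.2))
  have hε_le : ε ≤ x i ∧ ε ≤ 1 - x i ∧ ε ≤ x j ∧ ε ≤ 1 - x j :=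
    ⟨(min_le_left _ _).trans (min_le_left _ _), (min_le_left _ _).trans (min_le_right _ _),
      (min_le_right _ _).trans (min_le_left _ _), (min_le_right _ _).trans (min_le_right _ _)⟩
  have hmove (t : ℝ) (ht : t = ε ∨ t = -ε) :=
    add_smul_single_sub_single_mem_hypersimplex ⟨hx01, hxA, hxs⟩ hji.symm (hmemA i h.1)
      (hmemA j hj0) (t := t) (by rcases ht with rfl | rfl <;> constructor <;> linarith)
      (by rcases ht with rfl | rfl <;> constructor <;> linarith)
  have hmid : x ∈ openSegment ℝ (x + ε • (Pi.single i 1 - Pi.single j 1))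
      (x + (-ε) • (Pi.single i 1 - Pi.single j 1)) :=
    ⟨1 / 2, 1 / 2, by norm_num, by norm_num, by norm_num, by module⟩
  have := congrFun (hext _ (hmove ε (.inl rfl)) _ (hmove (-ε) (.inr rfl)) hmid).1 i
  simp [hji.symm] at this
  exact hε.ne' this

theorem extremePoints_hypersimplex_subset (A : Finset ι) (s : ℕ) :
    (hypersimplex A s).extremePoints ℝ ⊆
      (fun S : Finset ι ↦ (S : Set ι).indicator 1) '' ↑(A.powersetCard s) := by
  classical
  intro x hx
  have h01 := eq_zero_or_eq_one_of_mem_extremePoints_hypersimplex hx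
  obtain ⟨hxA, hxs⟩ := hx.1.2
  refine ⟨univ.filter (x · = 1), mem_powersetCard.2 ⟨fun i hi ↦ ?_, ?_⟩, ?_⟩
  · rw [mem_filter] at hi
    exact by_contra fun hiA ↦ one_ne_zero (hi.2.symm.trans (hxA i hiA))
  · have : ∑ i, x i = #(univ.filter (x · = 1)) := by
      rw [natCast_card_filter]
      refine sum_congr rfl fun i _ ↦ ?_
      rcases h01 i with h | h <;> simp [h]
    exact_mod_cast this.symm.trans hxs
  · ext i
    rcases h01 i with h | h <;> simp [h]

theorem hypersimplex_subset_convexHull (A : Finset ι) (s : ℕ) :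
    hypersimplex A s ⊆
      convexHull ℝ ((fun S : Finset ι ↦ (S : Set ι).indicator 1) '' ↑(A.powersetCard s)) := by
  rw [← closure_convexHull_extremePoints (isCompact_hypersimplex A s) (convex_hypersimplex A s)]
  exact closure_minimal (convexHull_mono (extremePoints_hypersimplex_subset A s))
    (((A.powersetCard s).finite_toSet.image _).isCompact_convexHull ℝ).isClosed

end Hypersimplex

theorem mem_smul_kSupBall {d k : ℕ} {w : EuclideanSpace ℝ (Fin d)} {μ : ℝ} (hμ : 0 < μ)
    (hw₀ : #(univ.filter fun i => w i ≠ 0) ≤ k) (hw : ‖w‖ ≤ μ) : w ∈ μ • kSupBall d k := by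
  refine ⟨μ⁻¹ • w, subset_convexHull ℝ _ ⟨?_, ?_⟩, smul_inv_smul₀ hμ.ne' w⟩
  · simpa [hμ.ne'] using hw₀
  · rw [norm_smul, Real.norm_of_nonneg (inv_nonneg.2 hμ.le)]
    exact inv_mul_le_one_of_le₀ hw hμ.le

theorem kSupBall_mem_nhds {d k : ℕ} (hk : 0 < k) :
    kSupBall d k ∈ nhds (0 : EuclideanSpace ℝ (Fin d)) := by
  rcases Nat.eq_zero_or_pos d with rfl | hd
  · refine Filter.univ_mem' fun w ↦ ?_
    rw [Subsingleton.elim w 0, ← one_smul ℝ (kSupBall 0 k)]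
    exact mem_smul_kSupBall one_pos (by simp) (by simp)
  refine Filter.mem_of_superset (Metric.ball_mem_nhds 0 (by positivity : (0 : ℝ) < 1 / d))
    fun w hw ↦ ?_
  have hw_eq : w = ∑ i, (1 / d : ℝ) • ((d : ℝ) • EuclideanSpace.single i (w i)) := by
    ext j
    simp [smul_smul, hd.ne']
  rw [hw_eq]
  refine (convex_convexHull ℝ _).sum_mem (fun _ _ ↦ by positivity) (by simp [hd.ne'])
    fun i _ ↦ subset_convexHull ℝ _ ⟨?_, ?_⟩
  · refine (card_le_card (t := {i}) fun j hj ↦ ?_).trans ((card_singleton i).trans_le hk)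
    by_contra hji
    simp [mem_singleton.not.1 hji] at hj
  · rw [mem_ball_zero_iff, lt_div_iff₀ (by positivity)] at hw
    rw [norm_smul, PiLp.norm_single, Real.norm_natCast]
    nlinarith [PiLp.norm_apply_le w i]

theorem inner_le_of_mem_kSupBall {d k : ℕ} (hk : 0 < k) (hkd : k ≤ d)
    {z : EuclideanSpace ℝ (Fin d)} (hz : Antitone fun i => z i) (hz₀ : ∀ i, 0 ≤ z i)
    {w : EuclideanSpace ℝ (Fin d)} (hw : w ∈ kSupBall d k) :
    inner ℝ z w ≤ √(∑ i ∈ univ.filter (fun i : Fin d => (i : ℕ) < k), z i ^ 2) := by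
  refine convexHull_min ?_ (convex_halfSpace_le (innerₗ _ z).isLinear _) hw
  rintro w ⟨hw₀, hw⟩
  set A := univ.filter fun i => w i ≠ 0
  have hinner : inner ℝ z w = ∑ i ∈ A, z i * w i := by
    rw [sum_filter_of_ne fun i _ h ↦ right_ne_zero_of_mul h, PiLp.inner_apply]
    simp [mul_comm]
  have hwA : ∑ i ∈ A, w i ^ 2 ≤ 1 := by
    calc ∑ i ∈ A, w i ^ 2 ≤ ∑ i, w i ^ 2 := sum_le_univ_sum_of_nonneg fun _ ↦ sq_nonneg _
      _ = ‖w‖ ^ 2 := (EuclideanSpace.real_norm_sq_eq w).symm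
      _ ≤ 1 := pow_le_one₀ (norm_nonneg w) hw
  have hzA : ∑ i ∈ A, z i ^ 2 ≤ ∑ i ∈ univ.filter (fun i : Fin d => (i : ℕ) < k), z i ^ 2 :=
    sum_le_sum_filter_lt_of_antitone hk hkd (fun _ _ hij ↦ pow_le_pow_left₀ (hz₀ _) (hz hij) 2)
      (fun _ ↦ sq_nonneg _) hw₀
  show inner ℝ z w ≤ _
  calc inner ℝ z w = ∑ i ∈ A, z i * w i := hinner
    _ ≤ √(∑ i ∈ A, z i ^ 2) * √(∑ i ∈ A, w i ^ 2) := Real.sum_mul_le_sqrt_mul_sqrt _ _ _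
    _ ≤ √(∑ i ∈ univ.filter (fun i : Fin d => (i : ℕ) < k), z i ^ 2) * 1 := by
      gcongr
      exact Real.sqrt_le_one.2 hwA
    _ = _ := mul_one _

theorem inner_le_kSupNorm_mul {d k : ℕ} (hk : 0 < k) (hkd : k ≤ d)
    {z : EuclideanSpace ℝ (Fin d)} (hz : Antitone fun i => z i) (hz₀ : ∀ i, 0 ≤ z i)
    (u : EuclideanSpace ℝ (Fin d)) :
    inner ℝ z u ≤ kSupNorm d k u * √(∑ i ∈ univ.filter (fun i : Fin d => (i : ℕ) < k), z i ^ 2) :=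
  apply_le_gauge_mul (absorbent_nhds_zero (kSupBall_mem_nhds hk)) (innerₗ _ z) (Real.sqrt_nonneg _)
    (fun _ hw ↦ inner_le_of_mem_kSupBall hk hkd hz hz₀ hw) u

theorem add_smul_mem_smul_kSupBall {d k s : ℕ} {A : Finset (Fin d)} {b : EuclideanSpace ℝ (Fin d)}
    {x : Fin d → ℝ} {β μ : ℝ} (hμ : 0 < μ) (hbA : ∀ i ∈ A, b i = 0)
    (hb₀ : #(univ.filter fun i => b i ≠ 0) + s ≤ k) (hx : x ∈ hypersimplex A s)
    (hnorm : ‖b‖ ^ 2 + s * β ^ 2 ≤ μ ^ 2) :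
    b + β • WithLp.toLp 2 x ∈ μ • kSupBall d k := by
  have hconvex : Convex ℝ {y : Fin d → ℝ | b + β • WithLp.toLp 2 y ∈ μ • kSupBall d k} :=
    (((convex_convexHull ℝ _).smul μ).translate_preimage_right b).linear_preimage
      (β • (WithLp.linearEquiv 2 ℝ (Fin d → ℝ)).symm.toLinearMap)
  refine convexHull_min ?_ hconvex (hypersimplex_subset_convexHull A s hx)
  rintro _ ⟨S, hS, rfl⟩
  rw [mem_coe, mem_powersetCard] at hS
  refine mem_smul_kSupBall hμ ?_ ?_
  · refine (card_le_card (t := (univ.filter fun i => b i ≠ 0) ∪ S) fun i hi ↦ ?_).trans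
      ((card_union_le _ _).trans (hS.2 ▸ hb₀))
    by_cases hiS : i ∈ S
    · exact mem_union_right _ hiS
    · rw [mem_filter] at hi
      simpa [hiS] using hi
  · have hsq : ‖b + β • WithLp.toLp 2 ((S : Set (Fin d)).indicator 1)‖ ^ 2
        = ‖b‖ ^ 2 + s * β ^ 2 := by
      have hcoord (i : Fin d) : (b i + β * (S : Set (Fin d)).indicator 1 i) ^ 2
          = b i ^ 2 + β ^ 2 * (S : Set (Fin d)).indicator 1 i := by
        by_cases hiS : i ∈ S
        · simp [hiS, hbA i (hS.1 hiS)]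
        · simp [hiS]
      have hcard : ∑ i, (S : Set (Fin d)).indicator (1 : Fin d → ℝ) i = s := by
        simp [Set.indicator_apply, hS.2]
      simp only [EuclideanSpace.real_norm_sq_eq, PiLp.add_apply, PiLp.smul_apply,
        smul_eq_mul, hcoord, sum_add_distrib, ← mul_sum, hcard]
      ring
    exact (sq_le_sq₀ (norm_nonneg _) hμ.le).1 (hsq ▸ hnorm)

theorem kSupNorm_le_of_head_add_capped {d k a s ℓ : ℕ} (has : a + s ≤ k)
    {w : EuclideanSpace ℝ (Fin d)} {β μ : ℝ} (hβ : 0 < β) (hμ : 0 < μ)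
    (htail : ∀ i : Fin d, ℓ ≤ (i : ℕ) → w i = 0)
    (hmid : ∀ i : Fin d, a ≤ (i : ℕ) → (i : ℕ) < ℓ → w i ∈ Set.Icc 0 β)
    (hsum : ∑ i ∈ univ.filter (fun i : Fin d => a ≤ (i : ℕ) ∧ (i : ℕ) < ℓ), w i = s * β)
    (hnorm : ∑ i ∈ univ.filter (fun i : Fin d => (i : ℕ) < a), w i ^ 2 + s * β ^ 2 ≤ μ ^ 2) :
    kSupNorm d k w ≤ μ := by
  refine gauge_le_of_mem hμ.le ?_
  set b : EuclideanSpace ℝ (Fin d) := WithLp.toLp 2 fun i => if (i : ℕ) < a then w i else 0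
  set x : Fin d → ℝ := fun i => if a ≤ (i : ℕ) ∧ (i : ℕ) < ℓ then w i / β else 0
  have hw : w = b + β • WithLp.toLp 2 x := by
    ext i
    by_cases hia : (i : ℕ) < a
    · simp [b, x, hia, show ¬ a ≤ (i : ℕ) by omega]
    by_cases hiℓ : (i : ℕ) < ℓ
    · simp [b, x, hia, hiℓ, show a ≤ (i : ℕ) by omega]
      field_simp
    · simp [b, x, hia, hiℓ, htail i (by omega)]
  rw [hw]
  refine add_smul_mem_smul_kSupBall (s := s)
    (A := univ.filter fun i : Fin d => a ≤ (i : ℕ) ∧ (i : ℕ) < ℓ) hμ (fun i hi ↦ ?_) ?_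
    ⟨fun i ↦ ?_, fun i hi ↦ ?_, ?_⟩ ?_
  · simp only [mem_filter, mem_univ, true_and] at hi
    simp [b, show ¬ (i : ℕ) < a by omega]
  · refine (Nat.add_le_add_right ((card_le_card (t := univ.filter fun i : Fin d => (i : ℕ) < a)
      fun i hi ↦ ?_).trans ?_) s).trans has
    · simp only [b, mem_filter, mem_univ, true_and, ne_eq, ite_eq_right_iff,
        Classical.not_imp] at hi ⊢
      exact hi.1
    · simp [Fin.card_filter_val_lt]
  · by_cases hi : a ≤ (i : ℕ) ∧ (i : ℕ) < ℓ
    · obtain ⟨h0, h1⟩ := hmid i hi.1 hi.2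
      simp only [x, if_pos hi]
      exact ⟨div_nonneg h0 hβ.le, div_le_one_of_le₀ h1 hβ.le⟩
    · simp [x, hi]
  · simp only [mem_filter, mem_univ, true_and] at hi
    simp [x, hi]
  · simp only [x, ← sum_filter, ← sum_div, hsum]
    field_simp
  · have hb : ‖b‖ ^ 2 = ∑ i ∈ univ.filter (fun i : Fin d => (i : ℕ) < a), w i ^ 2 := by
      rw [EuclideanSpace.real_norm_sq_eq, sum_filter]
      exact sum_congr rfl fun i _ ↦ by by_cases hia : (i : ℕ) < a <;> simp [b, hia]
    rwa [hb]

theorem eq_max_min_of_blocks {d a ℓ : ℕ} {L c : ℝ} {v z : Fin d → ℝ} (hL : 0 < L)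
    (hv₀ : ∀ i, 0 ≤ v i)
    (hhead : ∀ i : Fin d, (i : ℕ) < a → (L + 1) * c < v i)
    (hmid_le : ∀ i : Fin d, a ≤ (i : ℕ) → v i ≤ (L + 1) * c)
    (hmid_lt : ∀ i : Fin d, (i : ℕ) < ℓ → c < v i)
    (htail : ∀ i : Fin d, ℓ ≤ (i : ℕ) → v i ≤ c)
    (hz : ∀ i : Fin d, z i = if (i : ℕ) < a then v i / (L + 1) else if (i : ℕ) < ℓ then c else v i)
    (i : Fin d) : z i = max (v i / (L + 1)) (min (v i) c) := by
  have hL₁ : 0 < L + 1 := by linarith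
  rw [hz i]
  split_ifs with hia hiℓ
  · have : c < v i / (L + 1) := by rw [lt_div_iff₀ hL₁]; linarith [hhead i hia]
    rw [max_eq_left (by linarith [min_le_right (v i) c])]
  · have : v i / (L + 1) ≤ c := by rw [div_le_iff₀ hL₁]; linarith [hmid_le i (by omega)]
    rw [min_eq_right (hmid_lt i hiℓ).le, max_eq_right this]
  · rw [min_eq_left (htail i (by omega)), max_eq_right (div_le_self (hv₀ i) (by linarith))]

theorem sum_mid_eq_of_blocks {d k a r ℓ : ℕ} {L c : ℝ} {v q : EuclideanSpace ℝ (Fin d)}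
    (hak : a + r + 1 = k) (hkℓ : k ≤ ℓ) (hℓd : ℓ ≤ d)
    (hsum : ∑ i ∈ univ.filter (fun i : Fin d => a ≤ (i : ℕ) ∧ (i : ℕ) < ℓ), v i
      = ((ℓ : ℝ) - k + (L + 1) * r + L + 1) * c)
    (hq : ∀ i : Fin d, q i =
      if (i : ℕ) < a then L / (L + 1) * v i else if (i : ℕ) < ℓ then v i - c else 0) :
    ∑ i ∈ univ.filter (fun i : Fin d => a ≤ (i : ℕ) ∧ (i : ℕ) < ℓ), q i = (r + 1) * (L * c) := by
  have hq_mid : ∀ i ∈ univ.filter (fun i : Fin d => a ≤ (i : ℕ) ∧ (i : ℕ) < ℓ),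
      q i = v i - c := fun i hi ↦ by
    rw [mem_filter] at hi
    rw [hq i, if_neg (by omega), if_pos hi.2.2]
  rw [sum_congr rfl hq_mid, sum_sub_distrib, hsum, sum_const, card_filter_le_and_lt hℓd,
    nsmul_eq_mul, Nat.cast_sub (by omega), ← hak]
  push_cast
  ring

theorem kSupNorm_le_of_blocks {d k a r ℓ : ℕ} {L c : ℝ} {v q : EuclideanSpace ℝ (Fin d)}
    (hL : 0 < L) (hc : 0 < c) (hak : a + r + 1 ≤ k) (haℓ : a ≤ ℓ)
    (hmid_le : ∀ i : Fin d, a ≤ (i : ℕ) → v i ≤ (L + 1) * c)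
    (hmid_lt : ∀ i : Fin d, (i : ℕ) < ℓ → c < v i)
    (hq : ∀ i : Fin d, q i =
      if (i : ℕ) < a then L / (L + 1) * v i else if (i : ℕ) < ℓ then v i - c else 0)
    (hq_mid : ∑ i ∈ univ.filter (fun i : Fin d => a ≤ (i : ℕ) ∧ (i : ℕ) < ℓ), q i
      = (r + 1) * (L * c)) :
    kSupNorm d k q
      ≤ L * √(∑ i ∈ univ.filter (fun i : Fin d => (i : ℕ) < a), (v i / (L + 1)) ^ 2
        + (r + 1) * c ^ 2) := by
  refine kSupNorm_le_of_head_add_capped (a := a) (s := r + 1) (ℓ := ℓ) hak (mul_pos hL hc)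
    (by positivity) (fun i hi ↦ ?_) (fun i hia hiℓ ↦ ?_) (by rw [hq_mid]; push_cast; ring) ?_
  · rw [hq i, if_neg (by omega), if_neg (by omega)]
  · rw [hq i, if_neg (by omega), if_pos hiℓ]
    constructor <;> linarith [hmid_lt i hiℓ, hmid_le i hia]
  · have hq_head : ∀ i ∈ univ.filter (fun i : Fin d => (i : ℕ) < a),
        q i ^ 2 = L ^ 2 * (v i / (L + 1)) ^ 2 := fun i hi ↦ by
      rw [mem_filter] at hi
      rw [hq i, if_pos hi.2]
      ring
    rw [sum_congr rfl hq_head, ← mul_sum, mul_pow, mul_pow, Real.sq_sqrt (by positivity)]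
    push_cast
    linarith

theorem inner_sub_eq_of_blocks {d a r ℓ : ℕ} {L c : ℝ} {v q : EuclideanSpace ℝ (Fin d)}
    (hL : 0 < L)
    (hq : ∀ i : Fin d, q i =
      if (i : ℕ) < a then L / (L + 1) * v i else if (i : ℕ) < ℓ then v i - c else 0)
    (hq_mid : ∑ i ∈ univ.filter (fun i : Fin d => a ≤ (i : ℕ) ∧ (i : ℕ) < ℓ), q i
      = (r + 1) * (L * c)) :
    inner ℝ (v - q) q
      = L * (∑ i ∈ univ.filter (fun i : Fin d => (i : ℕ) < a), (v i / (L + 1)) ^ 2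
        + (r + 1) * c ^ 2) := by
  have hL₁ : L + 1 ≠ 0 := by positivity
  have hsplit (i : Fin d) : q i * (v i - q i)
      = (if (i : ℕ) < a then L * (v i / (L + 1)) ^ 2 else 0)
        + if a ≤ (i : ℕ) ∧ (i : ℕ) < ℓ then c * q i else 0 := by
    rw [hq i]
    split_ifs <;> first | omega | (field_simp; ring)
  rw [PiLp.inner_apply]
  simp only [RCLike.inner_apply, conj_trivial, PiLp.sub_apply]
  rw [sum_congr rfl fun i _ ↦ hsplit i, sum_add_distrib, ← sum_filter, ← sum_filter, ← mul_sum,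
    ← mul_sum, hq_mid]
  ring

theorem prox_objective_lt_of_blocks {d k a r ℓ : ℕ} {L c : ℝ} {v q : EuclideanSpace ℝ (Fin d)}
    (hL : 0 < L) (hak : a + r + 1 = k) (hkℓ : k ≤ ℓ) (hℓd : ℓ ≤ d)
    (hv : Antitone fun i => v i) (hv₀ : ∀ i, 0 ≤ v i)
    (hhead : ∀ i : Fin d, (i : ℕ) < a → (L + 1) * c < v i)
    (hmid_le : ∀ i : Fin d, a ≤ (i : ℕ) → v i ≤ (L + 1) * c)
    (hmid_lt : ∀ i : Fin d, (i : ℕ) < ℓ → c < v i)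
    (htail : ∀ i : Fin d, ℓ ≤ (i : ℕ) → v i ≤ c)
    (hsum : ∑ i ∈ univ.filter (fun i : Fin d => a ≤ (i : ℕ) ∧ (i : ℕ) < ℓ), v i
      = ((ℓ : ℝ) - k + (L + 1) * r + L + 1) * c)
    (hq : ∀ i : Fin d, q i =
      if (i : ℕ) < a then L / (L + 1) * v i else if (i : ℕ) < ℓ then v i - c else 0)
    {u : EuclideanSpace ℝ (Fin d)} (hu : u ≠ q) :
    1 / 2 * ‖q - v‖ ^ 2 + 1 / (2 * L) * kSupNorm d k q ^ 2
      < 1 / 2 * ‖u - v‖ ^ 2 + 1 / (2 * L) * kSupNorm d k u ^ 2 := by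
  have hL₁ : 0 < L + 1 := by linarith
  have hz (i : Fin d) : (v - q) i
      = if (i : ℕ) < a then v i / (L + 1) else if (i : ℕ) < ℓ then c else v i := by
    simp only [PiLp.sub_apply, hq i]
    split_ifs
    · field_simp
      ring
    all_goals ring
  have hz_clip := eq_max_min_of_blocks (z := fun i => (v - q) i) hL hv₀ hhead hmid_le hmid_lt
    htail hz
  have hz_anti : Antitone fun i => (v - q) i := fun i j hij ↦ by
    simp only [hz_clip]
    exact max_le_max (div_le_div_of_nonneg_right (hv hij) hL₁.le) (min_le_min_right c (hv hij))
  have hz₀ (i : Fin d) : 0 ≤ (v - q) i :=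
    (hz_clip i) ▸ le_max_of_le_left (div_nonneg (hv₀ i) hL₁.le)
  have hc : 0 < c := by
    have ha : a < d := by omega
    nlinarith [hmid_lt ⟨a, ha⟩ (by simp; omega), hmid_le ⟨a, ha⟩ le_rfl]
  have htop : ∑ i ∈ univ.filter (fun i : Fin d => (i : ℕ) < k), (v - q) i ^ 2
      = ∑ i ∈ univ.filter (fun i : Fin d => (i : ℕ) < a), (v i / (L + 1)) ^ 2
        + (r + 1) * c ^ 2 := by
    rw [sum_filter_lt_eq_add_of_eq_const (a := a) (k := k) (c := c ^ 2) (by omega) (by omega)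
        fun i hia hik ↦ by rw [hz i, if_neg (by omega), if_pos (by omega)],
      show k - a = r + 1 by omega]
    refine congrArg₂ (· + ·) (sum_congr rfl fun i hi ↦ ?_) (by push_cast; ring)
    rw [hz i, if_pos (mem_filter.1 hi).2]
  have hq_mid := sum_mid_eq_of_blocks hak hkℓ hℓd hsum hq
  have hdual := inner_le_kSupNorm_mul (k := k) (by omega) (by omega) hz_anti hz₀
  rw [htop] at hdual
  exact prox_objective_lt_of_dual_certificate hL hdual (gauge_nonneg q)
    (kSupNorm_le_of_blocks hL hc hak.le (by omega) hmid_le hmid_lt hq hq_mid)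
    (by rw [inner_sub_eq_of_blocks hL hq hq_mid, Real.sq_sqrt (by positivity)]) hu

section Ent

variable {d : ℕ} {v : EuclideanSpace ℝ (Fin d)}

theorem ent_succ (v : EuclideanSpace ℝ (Fin d)) (i : Fin d) : ent v (i + 1) = v i := by
  simp [ent]

theorem antitone_of_ent (hmono : ∀ i j : ℕ, 1 ≤ i → i ≤ j → j ≤ d → ent v j ≤ ent v i) :
    Antitone fun i => v i := fun i j hij ↦ by
  simpa only [ent_succ] using hmono (i + 1) (j + 1) (by omega) (by simpa using hij) j.isLt

theorem nonneg_of_ent (hmono : ∀ i j : ℕ, 1 ≤ i → i ≤ j → j ≤ d → ent v j ≤ ent v i)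
    (hnn : 0 ≤ ent v d) (i : Fin d) : 0 ≤ v i :=
  (ent_succ v i) ▸ hnn.trans (hmono (i + 1) d (by omega) i.isLt le_rfl)

theorem le_of_ent_succ_le (hv : Antitone fun i => v i) {m : ℕ} {t : ℝ} (h : ent v (m + 1) ≤ t)
    (i : Fin d) (hi : m ≤ i) : v i ≤ t := by
  have hm : m < d := by omega
  rw [show m + 1 = ((⟨m, hm⟩ : Fin d) : ℕ) + 1 from rfl, ent_succ] at h
  exact (hv (show (⟨m, hm⟩ : Fin d) ≤ i from hi)).trans h

theorem lt_of_lt_ent_succ (hv : Antitone fun i => v i) {m : ℕ} (hm : m < d) {t : ℝ}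
    (h : t < ent v (m + 1)) (i : Fin d) (hi : (i : ℕ) ≤ m) : t < v i := by
  rw [show m + 1 = ((⟨m, hm⟩ : Fin d) : ℕ) + 1 from rfl, ent_succ] at h
  exact h.trans_le (hv (show i ≤ ⟨m, hm⟩ from hi))

theorem sum_Icc_ent {a ℓ : ℕ} (hℓ : ℓ ≤ d) :
    ∑ m ∈ Icc (a + 1) ℓ, ent v m
      = ∑ i ∈ univ.filter (fun i : Fin d => a ≤ (i : ℕ) ∧ (i : ℕ) < ℓ), v i := by
  symm
  refine sum_bij (fun i _ ↦ (i : ℕ) + 1) (fun i hi ↦ ?_)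
    (fun i _ j _ h ↦ Fin.ext (by simpa using h)) (fun m hm ↦ ?_) fun i _ ↦ (ent_succ v i).symm
  · simp only [mem_filter, mem_univ, true_and, mem_Icc] at hi ⊢
    omega
  · rw [mem_Icc] at hm
    exact ⟨⟨m - 1, by omega⟩, by simp only [mem_filter, mem_univ, true_and]; omega, by simp; omega⟩

end Ent

theorem statement12_general (d k : ℕ) (L : ℝ) (hL : 0 < L)
    (v q : EuclideanSpace ℝ (Fin d))
    (hmono : ∀ i j : ℕ, 1 ≤ i → i ≤ j → j ≤ d → ent v j ≤ ent v i)
    (hnn : 0 ≤ ent v d)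
    (r ℓ : ℕ) (hr : r < k) (hlk : k ≤ ℓ) (hld : ℓ ≤ d)
    (T D : ℝ) (hT : T = ∑ i ∈ Finset.Icc (k - r) ℓ, ent v i)
    (hD : D = (ℓ : ℝ) - (k : ℝ) + (L + 1) * (r : ℝ) + L + 1)
    (hc1 : r = k - 1 ∨ T / D < 1 / (L + 1) * ent v (k - r - 1))
    (hc2 : 1 / (L + 1) * ent v (k - r) ≤ T / D)
    (hc3 : T / D < ent v ℓ)
    (hc4 : ℓ = d ∨ ent v (ℓ + 1) ≤ T / D)
    (hq : ∀ i : Fin d, q i =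
      if (i : ℕ) + 1 ≤ k - r - 1 then L / (L + 1) * v i
      else if (i : ℕ) + 1 ≤ ℓ then v i - T / D
      else 0) :
    ∀ u : EuclideanSpace ℝ (Fin d), u ≠ q →
      (1 / 2) * ‖q - v‖ ^ 2 + 1 / (2 * L) * kSupNorm d k q ^ 2
        < (1 / 2) * ‖u - v‖ ^ 2 + 1 / (2 * L) * kSupNorm d k u ^ 2 := by
  intro u hu
  have hL₁ : 0 < L + 1 := by linarith
  have hv := antitone_of_ent hmono
  have hD₀ : D ≠ 0 := by
    have : (k : ℝ) ≤ ℓ := by exact_mod_cast hlk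
    have : 0 ≤ (L + 1) * (r : ℝ) := by positivity
    rw [hD]
    exact ne_of_gt (by linarith)
  refine prox_objective_lt_of_blocks (a := k - r - 1) (r := r) (c := T / D) hL (by omega) hlk hld
    hv (nonneg_of_ent hmono hnn) (fun i hi ↦ ?_) (fun i hi ↦ ?_) (fun i hi ↦ ?_) (fun i hi ↦ ?_) ?_
    (fun i ↦ by simp only [hq i, Nat.add_one_le_iff]) hu
  · obtain h | h := hc1
    · omega
    rw [one_div_mul_eq_div, lt_div_iff₀' hL₁, show k - r - 1 = (k - r - 2) + 1 by omega] at h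
    exact lt_of_lt_ent_succ hv (by omega) h i (by omega)
  · rw [one_div_mul_eq_div, div_le_iff₀' hL₁, show k - r = (k - r - 1) + 1 by omega] at hc2
    exact le_of_ent_succ_le hv hc2 i hi
  · rw [show ℓ = (ℓ - 1) + 1 by omega] at hc3
    exact lt_of_lt_ent_succ hv (by omega) hc3 i (by omega)
  · obtain h | h := hc4
    · omega
    exact le_of_ent_succ_le hv h i hi
  · rw [← sum_Icc_ent hld, show k - r - 1 + 1 = k - r by omega, ← hT, ← hD, mul_div_cancel₀ _ hD₀]

/-- correctness of the proximity-operator algorithm. If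
`v_1 ≥ … ≥ v_d ≥ 0`, `r ∈ {0,…,k−1}`, `ℓ ∈ {k,…,d}` satisfy (with
`T = ∑_{i=k−r}^ℓ v_i`, `D = ℓ − k + (L+1)r + L + 1`, and the conventions
`v_0 = +∞`, `v_{d+1} = −∞`, i.e. the corresponding inequalities are vacuous when
`r = k−1` resp. `ℓ = d`):
`(1/(L+1))v_{k−r−1} > T/D ≥ (1/(L+1))v_{k−r}` and `v_ℓ > T/D ≥ v_{ℓ+1}`,
then `q` given by `q_i = (L/(L+1))v_i` for `i ≤ k−r−1`, `q_i = v_i − T/D` for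
`k−r ≤ i ≤ ℓ`, `q_i = 0` for `i > ℓ`, is the unique minimizer of
`u ↦ ½‖u − v‖² + (1/(2L))(‖u‖ₖˢᵖ)²`, i.e. `q = prox_{(1/(2L))(‖·‖ₖˢᵖ)²}(v)`. -/
theorem statement12 (d k : ℕ) (hk1 : 1 ≤ k) (hkd : k ≤ d) (L : ℝ) (hL : 0 < L)
    (v q : EuclideanSpace ℝ (Fin d))
    (hmono : ∀ i j : ℕ, 1 ≤ i → i ≤ j → j ≤ d → ent v j ≤ ent v i)
    (hnn : 0 ≤ ent v d)
    (r ℓ : ℕ) (hr : r < k) (hlk : k ≤ ℓ) (hld : ℓ ≤ d)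
    (T D : ℝ) (hT : T = ∑ i ∈ Finset.Icc (k - r) ℓ, ent v i)
    (hD : D = (ℓ : ℝ) - (k : ℝ) + (L + 1) * (r : ℝ) + L + 1)
    (hc1 : r = k - 1 ∨ T / D < 1 / (L + 1) * ent v (k - r - 1))
    (hc2 : 1 / (L + 1) * ent v (k - r) ≤ T / D)
    (hc3 : T / D < ent v ℓ)
    (hc4 : ℓ = d ∨ ent v (ℓ + 1) ≤ T / D)
    (hq : ∀ i : Fin d, q i =
      if (i : ℕ) + 1 ≤ k - r - 1 then L / (L + 1) * v i
      else if (i : ℕ) + 1 ≤ ℓ then v i - T / D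
      else 0) :
    ∀ u : EuclideanSpace ℝ (Fin d), u ≠ q →
      (1 / 2) * ‖q - v‖ ^ 2 + 1 / (2 * L) * kSupNorm d k q ^ 2
        < (1 / 2) * ‖u - v‖ ^ 2 + 1 / (2 * L) * kSupNorm d k u ^ 2 :=
  statement12_general d k L hL v q hmono hnn r ℓ hr hlk hld T D hT hD hc1 hc2 hc3 hc4 hq
end

section
/- Let X ∈ ℝ^{n×d}, y ∈ ℝ^n, λ₁, λ₂ > 0, and suppose ŵ ≠ 0 minimizes the elastic-net objective w ↦ (1/2)‖Xw − y‖₂² + λ₁‖w‖₁ + λ₂‖w‖₂² over ℝ^d. Set k := (‖ŵ‖₁ / ‖ŵ‖₂)², which lies in [1, d]. Then ŵ minimizes ‖Xw − y‖₂² over the set {w ∈ ℝ^d : max{‖w‖₂, ‖w‖₁/√k} ≤ max{‖ŵ‖₂, ‖ŵ‖₁/√k}}. -/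
/-! For `k = (‖ŵ‖₁/‖ŵ‖₂)²` the two norms entering `‖ŵ‖ₖᵉˡ` coincide, `‖ŵ‖₁/√k = ‖ŵ‖₂`, so the
elastic-net ball of radius `‖ŵ‖ₖᵉˡ` is the intersection of the `ℓ²`-ball of radius `‖ŵ‖₂` and the
`ℓ¹`-ball of radius `‖ŵ‖₁`. On it both penalty terms are at most their value at `ŵ`, so the
minimality of `ŵ` for the penalized objective forces `‖Xŵ − y‖² ≤ ‖Xw − y‖²`. That `k ∈ [1, d]`
is `‖ŵ‖₂ ≤ ‖ŵ‖₁ ≤ √d ‖ŵ‖₂`. -/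

open Finset Real

namespace ElasticNet

variable {ι : Type*} [Fintype ι]

lemma sum_sq_pos {v : ι → ℝ} (hv : v ≠ 0) : 0 < ∑ i, v i ^ 2 := by
  obtain ⟨i, hi⟩ := Function.ne_iff.mp hv
  exact sum_pos' (fun j _ => sq_nonneg (v j)) ⟨i, mem_univ i, sq_pos_of_ne_zero hi⟩

lemma sum_sq_le_sq_sum_abs (v : ι → ℝ) : ∑ i, v i ^ 2 ≤ (∑ i, |v i|) ^ 2 := by
  simpa only [sq_abs] using sum_sq_le_sq_sum_of_nonneg (s := univ) (fun i _ => abs_nonneg (v i))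

lemma sq_sum_abs_le_card_mul_sum_sq (v : ι → ℝ) :
    (∑ i, |v i|) ^ 2 ≤ Fintype.card ι * ∑ i, v i ^ 2 := by
  simpa only [sq_abs, card_univ] using sq_sum_le_card_mul_sum_sq (s := univ) (f := fun i => |v i|)

lemma sum_abs_pos {v : ι → ℝ} (hv : v ≠ 0) : 0 < ∑ i, |v i| := by
  obtain ⟨i, hi⟩ := Function.ne_iff.mp hv
  exact sum_pos' (fun j _ => abs_nonneg (v j)) ⟨i, mem_univ i, abs_pos.mpr hi⟩

lemma sparsity_ratio_mem_Icc {v : ι → ℝ} (hv : v ≠ 0) :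
    ((∑ i, |v i|) / √(∑ i, v i ^ 2)) ^ 2 ∈ Set.Icc (1 : ℝ) (Fintype.card ι) := by
  have hpos := sum_sq_pos hv
  rw [div_pow, sq_sqrt hpos.le]
  constructor
  · rw [le_div_iff₀ hpos, one_mul]
    exact sum_sq_le_sq_sum_abs v
  · rw [div_le_iff₀ hpos]
    exact sq_sum_abs_le_card_mul_sum_sq v

lemma sum_abs_div_sqrt_sparsity_ratio {v : ι → ℝ} (hv : v ≠ 0) :
    (∑ i, |v i|) / √(((∑ i, |v i|) / √(∑ i, v i ^ 2)) ^ 2) = √(∑ i, v i ^ 2) := by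
  have hpos := sum_sq_pos hv
  rw [sqrt_sq (by positivity), div_div_cancel₀ (sum_abs_pos hv).ne']

lemma sum_sq_le_and_sum_abs_le_of_elasticNorm_le {v w : ι → ℝ} (hv : v ≠ 0)
    (hw : max √(∑ i, w i ^ 2) ((∑ i, |w i|) / √(((∑ i, |v i|) / √(∑ i, v i ^ 2)) ^ 2))
      ≤ max √(∑ i, v i ^ 2) ((∑ i, |v i|) / √(((∑ i, |v i|) / √(∑ i, v i ^ 2)) ^ 2))) :
    ∑ i, w i ^ 2 ≤ ∑ i, v i ^ 2 ∧ ∑ i, |w i| ≤ ∑ i, |v i| := by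
  have hk : 0 < √(((∑ i, |v i|) / √(∑ i, v i ^ 2)) ^ 2) :=
    sqrt_pos.mpr (zero_lt_one.trans_le (sparsity_ratio_mem_Icc hv).1)
  have hnorms := sum_abs_div_sqrt_sparsity_ratio hv
  constructor
  · have h2 := (le_max_left _ _).trans (hw.trans_eq (by rw [hnorms, max_self]))
    exact (sqrt_le_sqrt_iff (sum_sq_pos hv).le).mp h2
  · have h1 := (le_max_right _ _).trans (hw.trans_eq (by rw [hnorms, max_self, ← hnorms]))
    exact (div_le_div_iff_of_pos_right hk).mp h1

end ElasticNet

/-- if `ŵ ≠ 0` minimizes the elastic-net objective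
`w ↦ ½‖Xw − y‖² + λ₁‖w‖₁ + λ₂‖w‖₂²` and `k := (‖ŵ‖₁/‖ŵ‖₂)²`, then `k ∈ [1, d]`
and `ŵ` minimizes `‖Xw − y‖²` over `{w : ‖w‖ₖᵉˡ ≤ ‖ŵ‖ₖᵉˡ}`, where
`‖w‖ₖᵉˡ = max{‖w‖₂, ‖w‖₁/√k}`. -/
theorem statement13 (n d : ℕ) (X : Fin n → Fin d → ℝ) (y : Fin n → ℝ)
    (l1 l2 : ℝ) (hl1 : 0 < l1) (hl2 : 0 < l2)
    (what : Fin d → ℝ) (hne : what ≠ 0)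
    (hmin : ∀ w : Fin d → ℝ,
      (1 / 2) * (∑ j, ((∑ i, X j i * what i) - y j) ^ 2)
          + l1 * ∑ i, |what i| + l2 * ∑ i, what i ^ 2
        ≤ (1 / 2) * (∑ j, ((∑ i, X j i * w i) - y j) ^ 2)
          + l1 * ∑ i, |w i| + l2 * ∑ i, w i ^ 2)
    (kk : ℝ)
    (hkk : kk = ((∑ i, |what i|) / Real.sqrt (∑ i, what i ^ 2)) ^ 2) :
    kk ∈ Set.Icc (1 : ℝ) (d : ℝ) ∧
    ∀ w : Fin d → ℝ,
      max (Real.sqrt (∑ i, w i ^ 2)) ((∑ i, |w i|) / Real.sqrt kk)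
        ≤ max (Real.sqrt (∑ i, what i ^ 2)) ((∑ i, |what i|) / Real.sqrt kk) →
      ∑ j, ((∑ i, X j i * what i) - y j) ^ 2 ≤ ∑ j, ((∑ i, X j i * w i) - y j) ^ 2 := by
  subst hkk
  refine ⟨by simpa only [Fintype.card_fin] using ElasticNet.sparsity_ratio_mem_Icc hne,
    fun w hw => ?_⟩
  obtain ⟨hw2, hw1⟩ := ElasticNet.sum_sq_le_and_sum_abs_le_of_elasticNorm_le hne hw
  have hpen1 := mul_le_mul_of_nonneg_left hw1 hl1.le
  have hpen2 := mul_le_mul_of_nonneg_left hw2 hl2.le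
  linarith [hmin w]
end
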